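/- arXiv:0906.0807 — 9 statements merged into one kernel-verified Lean document; each statement's English description precedes it below -/
import Mathlib

section
/- (Baillon–Haddad) Let f : H → ℝ be convex and Fréchet differentiable with ∇f β-Lipschitz continuous for some β > 0. Then ∇f is 1/β-cocoercive, i.e., β⟨x - y, ∇f(x) - ∇f(y)⟩ ≥ ‖∇f(x) - ∇f(y)‖² for all x, y ∈ H. -/
open RealInnerProductSpace

section Aux

variable {H : Type*} [NormedAddCommGroup H] [InnerProductSpace ℝ H] [CompleteSpace H]

private lemma bh_line_hasDerivAt (h : H → ℝ) (h' : H → H)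
    (hd : ∀ p, HasGradientAt h (h' p) p) (x v : H) (t : ℝ) :
    HasDerivAt (fun s : ℝ => h (x + s • v)) ⟪h' (x + t • v), v⟫ t := by
  have hline : HasDerivAt (fun s : ℝ => x + s • v) v t := by
    simpa using ((hasDerivAt_id t).smul_const v).const_add x
  have hf : HasFDerivAt h (InnerProductSpace.toDual ℝ H (h' (x + t • v))) (x + t • v) := hd _
  simpa [Function.comp_def] using hf.comp_hasDerivAt t hline

private lemma bh_grad_ineq (h : H → ℝ) (h' : H → H)
    (hc : ConvexOn ℝ Set.univ h) (hd : ∀ p, HasGradientAt h (h' p) p) (x y : H) :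
    h x + ⟪h' x, y - x⟫ ≤ h y := by
  set g : ℝ → ℝ := fun s => h (x + s • (y - x)) with hgdef
  have hgd : HasDerivAt g ⟪h' x, y - x⟫ 0 := by
    simpa using bh_line_hasDerivAt h h' hd x (y - x) 0
  have hgeq : g = h ∘ (AffineMap.lineMap x y : ℝ →ᵃ[ℝ] H) := by
    funext s
    simp [hgdef, AffineMap.lineMap_apply, add_comm]
  have hgc : ConvexOn ℝ Set.univ g := by
    have := hc.comp_affineMap (AffineMap.lineMap x y : ℝ →ᵃ[ℝ] H)
    simpa [hgeq] using this
  have hs := hgc.le_slope_of_hasDerivAt (Set.mem_univ (0:ℝ)) (Set.mem_univ (1:ℝ)) one_pos hgd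
  rw [slope_def_field] at hs
  have hg0 : g 0 = h x := by simp [hgdef]
  have hg1 : g 1 = h y := by simp [hgdef]
  rw [hg0, hg1] at hs
  have : ⟪h' x, y - x⟫ ≤ h y - h x := by simpa using hs
  linarith

private lemma bh_convex_of_monotone_grad (h : H → ℝ) (h' : H → H)
    (hd : ∀ p, HasGradientAt h (h' p) p)
    (hmono : ∀ a b : H, 0 ≤ ⟪h' a - h' b, a - b⟫) :
    ConvexOn ℝ Set.univ h := by
  refine ⟨convex_univ, ?_⟩
  intro x _ y _ a b ha hb hab
  set g : ℝ → ℝ := fun s => h (x + s • (y - x)) with hgdef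
  have hgd : ∀ t : ℝ, HasDerivAt g ⟪h' (x + t • (y - x)), y - x⟫ t :=
    fun t => bh_line_hasDerivAt h h' hd x (y - x) t
  have hdiff : Differentiable ℝ g := fun t => (hgd t).differentiableAt
  have hderiv : ∀ t, deriv g t = ⟪h' (x + t • (y - x)), y - x⟫ := fun t => (hgd t).deriv
  have hmg : Monotone (deriv g) := by
    intro s t hst
    rw [hderiv, hderiv]
    rcases eq_or_lt_of_le hst with rfl | hlt
    · exact le_refl _
    · have key := hmono (x + t • (y - x)) (x + s • (y - x))
      have heq : (x + t • (y - x)) - (x + s • (y - x)) = (t - s) • (y - x) := by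
        rw [sub_smul]; abel
      rw [heq, real_inner_smul_right] at key
      have h2 : 0 ≤ ⟪h' (x + t • (y - x)) - h' (x + s • (y - x)), y - x⟫ :=
        nonneg_of_mul_nonneg_right key (sub_pos.2 hlt)
      rw [inner_sub_left] at h2
      linarith
  have hgc : ConvexOn ℝ Set.univ g := hmg.convexOn_univ_of_deriv hdiff
  have h2 := hgc.2 (Set.mem_univ (0:ℝ)) (Set.mem_univ (1:ℝ)) ha hb hab
  have hg0 : g 0 = h x := by simp [hgdef]
  have hg1 : g 1 = h y := by simp [hgdef]
  have hgb : g (a • (0:ℝ) + b • 1) = h (a • x + b • y) := by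
    have ha' : a = 1 - b := by linarith
    have e : a • x + b • y = x + b • (y - x) := by
      rw [ha', sub_smul, one_smul, smul_sub]; abel
    simp [hgdef, e]
  rw [hg0, hg1, hgb] at h2
  simpa using h2

private lemma bh_hasGradientAt_normSq (c : ℝ) (p : H) :
    HasGradientAt (fun z : H => c * ‖z‖ ^ 2) ((2 * c) • p) p := by
  rw [hasGradientAt_iff_hasFDerivAt]
  have h1 : HasFDerivAt (fun z : H => (inner ℝ z z : ℝ))
      ((fderivInnerCLM ℝ ((p : H), p)).comp
        (((ContinuousLinearMap.id ℝ H)).prod (ContinuousLinearMap.id ℝ H))) p :=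
    (hasFDerivAt_id p).inner ℝ (hasFDerivAt_id p)
  have h2 := h1.const_mul c
  have hfe : (fun z : H => c * (inner ℝ z z : ℝ)) = fun z : H => c * ‖z‖ ^ 2 := by
    funext z; rw [real_inner_self_eq_norm_sq]
  rw [hfe] at h2
  have hce : (c • ((fderivInnerCLM ℝ ((p : H), p)).comp
        (((ContinuousLinearMap.id ℝ H)).prod (ContinuousLinearMap.id ℝ H))))
      = InnerProductSpace.toDual ℝ H ((2 * c) • p) := by
    ext w
    simp [fderivInnerCLM_apply, real_inner_smul_left, real_inner_comm p w]
    ring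
  rwa [hce] at h2

private lemma bh_hasGradientAt_sub {f g : H → ℝ} {a b x : H}
    (hf : HasGradientAt f a x) (hg : HasGradientAt g b x) :
    HasGradientAt (fun z => f z - g z) (a - b) x := by
  rw [hasGradientAt_iff_hasFDerivAt] at *
  rw [map_sub]
  exact hf.sub hg

private lemma bh_hasGradientAt_inner_const (c x : H) :
    HasGradientAt (fun z : H => ⟪c, z⟫) c x := by
  rw [hasGradientAt_iff_hasFDerivAt]
  exact (InnerProductSpace.toDual ℝ H c).hasFDerivAt

private lemma bh_descent (f : H → ℝ) (f' : H → H) (β : ℝ) (hβ : 0 < β)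
    (hd : ∀ p, HasGradientAt f (f' p) p)
    (hlip : ∀ a b : H, ‖f' a - f' b‖ ≤ β * ‖a - b‖) (x y : H) :
    f y ≤ f x + ⟪f' x, y - x⟫ + β / 2 * ‖y - x‖ ^ 2 := by
  set h : H → ℝ := fun z => β / 2 * ‖z‖ ^ 2 - f z with hh
  have hgrad : ∀ p, HasGradientAt h (β • p - f' p) p := by
    intro p
    have := bh_hasGradientAt_sub (bh_hasGradientAt_normSq (β / 2) p) (hd p)
    have e : (2 * (β / 2)) • p = β • p := by
      have h2 : 2 * (β / 2) = β := by ring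
      rw [h2]
    rwa [e] at this
  have hmono : ∀ a b : H, 0 ≤ ⟪(β • a - f' a) - (β • b - f' b), a - b⟫ := by
    intro a b
    have e : (β • a - f' a) - (β • b - f' b) = β • (a - b) - (f' a - f' b) := by
      rw [smul_sub]; abel
    rw [e, inner_sub_left, real_inner_smul_left, real_inner_self_eq_norm_sq]
    have hcs : ⟪f' a - f' b, a - b⟫ ≤ ‖f' a - f' b‖ * ‖a - b‖ := real_inner_le_norm _ _
    have hl := hlip a b
    nlinarith [norm_nonneg (a - b), norm_nonneg (f' a - f' b)]
  have hc := bh_convex_of_monotone_grad h _ hgrad hmono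
  have key := bh_grad_ineq h _ hc hgrad x y
  simp only [hh] at key
  rw [inner_sub_left, real_inner_smul_left] at key
  have hexp : ⟪x, y - x⟫ = ⟪x, y⟫ - ‖x‖ ^ 2 := by
    rw [inner_sub_right, real_inner_self_eq_norm_sq]
  have hnorm : ‖y - x‖ ^ 2 = ‖y‖ ^ 2 - 2 * ⟪x, y⟫ + ‖x‖ ^ 2 := by
    rw [← real_inner_self_eq_norm_sq, inner_sub_sub_self, real_inner_self_eq_norm_sq,
      real_inner_self_eq_norm_sq, real_inner_comm]
    ring
  rw [hexp] at key
  nlinarith [key]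

end Aux

theorem baillon_haddad
    {H : Type*} [NormedAddCommGroup H] [InnerProductSpace ℝ H] [CompleteSpace H]
    (f : H → ℝ) (f' : H → H) (β : ℝ) (hβ : 0 < β)
    (hconv : ConvexOn ℝ Set.univ f)
    (hdiff : ∀ x : H, HasGradientAt f (f' x) x)
    (hlip : ∀ x y : H, ‖f' x - f' y‖ ≤ β * ‖x - y‖) :
    ∀ x y : H, β * ⟪x - y, f' x - f' y⟫ ≥ ‖f' x - f' y‖ ^ 2 := by
  -- main auxiliary estimate
  have main : ∀ x y : H,
      f x - ⟪f' x, x⟫ ≤ f y - ⟪f' x, y⟫ - 1 / (2 * β) * ‖f' y - f' x‖ ^ 2 := by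
    intro x y
    set φ : H → ℝ := fun z => f z - ⟪f' x, z⟫ with hφ
    set φ' : H → H := fun z => f' z - f' x with hφ'
    have hφd : ∀ p, HasGradientAt φ (φ' p) p :=
      fun p => bh_hasGradientAt_sub (hdiff p) (bh_hasGradientAt_inner_const (f' x) p)
    have hφlip : ∀ a b : H, ‖φ' a - φ' b‖ ≤ β * ‖a - b‖ := by
      intro a b
      have : φ' a - φ' b = f' a - f' b := by simp [hφ']
      rw [this]; exact hlip a b
    -- monotone gradient of f (from convexity)
    have hfmono : ∀ a b : H, 0 ≤ ⟪f' a - f' b, a - b⟫ := by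
      intro a b
      have h1 := bh_grad_ineq f f' hconv hdiff a b
      have h2 := bh_grad_ineq f f' hconv hdiff b a
      have e1 : ⟪f' b, a - b⟫ = ⟪f' b, a⟫ - ⟪f' b, b⟫ := inner_sub_right _ _ _
      have e2 : ⟪f' b, b - a⟫ = ⟪f' b, b⟫ - ⟪f' b, a⟫ := inner_sub_right _ _ _
      have e3 : ⟪f' a, a - b⟫ = ⟪f' a, a⟫ - ⟪f' a, b⟫ := inner_sub_right _ _ _
      have e4 : ⟪f' a, b - a⟫ = ⟪f' a, b⟫ - ⟪f' a, a⟫ := inner_sub_right _ _ _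
      rw [inner_sub_left, e1, e3]
      linarith
    have hφmono : ∀ a b : H, 0 ≤ ⟪φ' a - φ' b, a - b⟫ := by
      intro a b
      have : φ' a - φ' b = f' a - f' b := by simp [hφ']
      rw [this]; exact hfmono a b
    have hφconv := bh_convex_of_monotone_grad φ φ' hφd hφmono
    -- x minimizes φ
    have hφ'x : φ' x = 0 := by simp [hφ']
    have hmin : ∀ z : H, φ x ≤ φ z := by
      intro z
      have := bh_grad_ineq φ φ' hφconv hφd x z
      rw [hφ'x] at this
      simpa using this
    -- descent step
    set z : H := y - β⁻¹ • φ' y with hz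
    have hdesc := bh_descent φ φ' β hβ hφd hφlip y z
    have hzy : z - y = -(β⁻¹ • φ' y) := by rw [hz]; abel
    have hi : ⟪φ' y, z - y⟫ = - (β⁻¹ * ‖φ' y‖ ^ 2) := by
      rw [hzy, inner_neg_right, real_inner_smul_right, real_inner_self_eq_norm_sq]
    have hn : ‖z - y‖ ^ 2 = β⁻¹ ^ 2 * ‖φ' y‖ ^ 2 := by
      rw [hzy, norm_neg, norm_smul, mul_pow]
      congr 1
      rw [Real.norm_eq_abs, sq_abs]
    rw [hi, hn] at hdesc
    have hfinal : φ x ≤ φ y - 1 / (2 * β) * ‖φ' y‖ ^ 2 := by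
      have := (hmin z).trans hdesc
      have hβne : β ≠ 0 := ne_of_gt hβ
      have e : φ y + -(β⁻¹ * ‖φ' y‖ ^ 2) + β / 2 * (β⁻¹ ^ 2 * ‖φ' y‖ ^ 2)
          = φ y - 1 / (2 * β) * ‖φ' y‖ ^ 2 := by
        field_simp
        ring
      linarith [this, e.le, e.ge]
    simpa [hφ, hφ'] using hfinal
  intro x y
  have h1 := main x y
  have h2 := main y x
  have e1 : ⟪f' x, x⟫ - ⟪f' x, y⟫ = ⟪f' x, x - y⟫ := by rw [inner_sub_right]
  have e2 : ⟪f' y, y⟫ - ⟪f' y, x⟫ = - ⟪f' y, x - y⟫ := by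
    rw [inner_sub_right]; ring
  have hsum : 1 / (2 * β) * ‖f' y - f' x‖ ^ 2 + 1 / (2 * β) * ‖f' x - f' y‖ ^ 2
      ≤ ⟪f' x, x - y⟫ - ⟪f' y, x - y⟫ := by linarith [e1, e2, h1, h2]
  have hne : ‖f' y - f' x‖ = ‖f' x - f' y‖ := by rw [← norm_neg]; congr 1; abel
  rw [hne] at hsum
  have hinner : ⟪f' x, x - y⟫ - ⟪f' y, x - y⟫ = ⟪x - y, f' x - f' y⟫ := by
    simp only [inner_sub_left, inner_sub_right, real_inner_comm]
  rw [hinner] at hsum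
  have hβne : β ≠ 0 := ne_of_gt hβ
  rw [ge_iff_le]
  have : (1 / β) * ‖f' x - f' y‖ ^ 2 ≤ ⟪x - y, f' x - f' y⟫ := by
    have e : 1 / (2 * β) * ‖f' x - f' y‖ ^ 2 + 1 / (2 * β) * ‖f' x - f' y‖ ^ 2
        = (1 / β) * ‖f' x - f' y‖ ^ 2 := by field_simp; ring
    linarith [hsum, e.le, e.ge]
  calc ‖f' x - f' y‖ ^ 2 = β * ((1 / β) * ‖f' x - f' y‖ ^ 2) := by field_simp
    _ ≤ β * ⟪x - y, f' x - f' y⟫ := by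
        exact mul_le_mul_of_nonneg_left this hβ.le
end

section
/- Let f : H → ℝ be Fréchet differentiable such that x ↦ (β/2)‖x‖² - f(x) is convex. Then ∇f is β-Lipschitz continuous, provided f is convex. -/
open RealInnerProductSpace

/-- First-order condition for a convex differentiable function. -/
lemma convex_grad_lower_bound
    {H : Type*} [NormedAddCommGroup H] [InnerProductSpace ℝ H] [CompleteSpace H]
    {g : H → ℝ} (hg : ConvexOn ℝ Set.univ g) {G x : H}
    (hG : HasGradientAt g G x) (z : H) :
    g x + ⟪G, z - x⟫ ≤ g z := by
  set c : ℝ → H := fun t => t • (z - x) + x with hc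
  have hconv : ConvexOn ℝ Set.univ (g ∘ c) := by
    have := hg.comp_affineMap (AffineMap.lineMap x z)
    have heq : (g ∘ ⇑(AffineMap.lineMap x z)) = g ∘ c := by
      funext t
      simp [AffineMap.lineMap_apply, hc]
    rw [heq, Set.preimage_univ] at this
    exact this
  have hcd : HasDerivAt c (z - x) 0 := by
    simpa [hc] using ((hasDerivAt_id (0:ℝ)).smul_const (z - x)).add_const x
  have hx0 : c 0 = x := by simp [hc]
  have hfd : HasFDerivAt g ((InnerProductSpace.toDual ℝ H) G) (c 0) := hx0 ▸ hG
  have hgd : HasDerivAt (g ∘ c) ⟪G, z - x⟫ 0 := by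
    simpa using hfd.comp_hasDerivAt (0:ℝ) hcd
  have hslope := hconv.le_slope_of_hasDerivAt (Set.mem_univ (0:ℝ)) (Set.mem_univ (1:ℝ))
    one_pos hgd
  have h01 : slope (g ∘ c) 0 1 = g z - g x := by
    simp [slope, hc]
  rw [h01] at hslope
  linarith

lemma quad_hasGradientAt
    {H : Type*} [NormedAddCommGroup H] [InnerProductSpace ℝ H] [CompleteSpace H]
    (β : ℝ) (x : H) :
    HasGradientAt (fun x : H => β / 2 * ‖x‖ ^ 2) (β • x) x := by
  rw [hasGradientAt_iff_hasFDerivAt]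
  have h1 : HasFDerivAt (fun x : H => ⟪x, x⟫)
      ((innerSL ℝ x) + (innerSL ℝ x)) x := by
    have := (hasFDerivAt_id x).inner ℝ (hasFDerivAt_id x)
    refine this.congr_fderiv ?_
    ext v
    simp [real_inner_comm]
  have h2 : HasFDerivAt (fun x : H => β / 2 * ‖x‖ ^ 2)
      ((β / 2) • ((innerSL ℝ x) + (innerSL ℝ x))) x := by
    have := h1.const_mul (β / 2)
    have hfun : (fun x : H => β / 2 * ‖x‖ ^ 2) = fun y => β / 2 * ⟪y, y⟫ := by
      funext v
      rw [real_inner_self_eq_norm_sq]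
    rw [hfun]; exact this
  refine h2.congr_fderiv ?_
  ext v
  simp [InnerProductSpace.toDual, real_inner_smul_left]
  ring

theorem quadratic_minus_convex_implies_lipschitz_gradient
    {H : Type*} [NormedAddCommGroup H] [InnerProductSpace ℝ H] [CompleteSpace H]
    (f : H → ℝ) (f' : H → H) (β : ℝ) (hβ : 0 < β)
    (hconv : ConvexOn ℝ Set.univ f)
    (hdiff : ∀ x : H, HasGradientAt f (f' x) x)
    (hq : ConvexOn ℝ Set.univ (fun x : H => β / 2 * ‖x‖ ^ 2 - f x)) :
    ∀ x y : H, ‖f' x - f' y‖ ≤ β * ‖x - y‖ := by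
  -- descent lemma
  have descent : ∀ u v : H, f v ≤ f u + ⟪f' u, v - u⟫ + β / 2 * ‖v - u‖ ^ 2 := by
    intro u v
    have hg : HasGradientAt (fun x : H => β / 2 * ‖x‖ ^ 2 - f x) (β • u - f' u) u := by
      rw [hasGradientAt_iff_hasFDerivAt, map_sub]
      exact (quad_hasGradientAt β u).sub (hdiff u)
    have := convex_grad_lower_bound hq hg v
    have hexp : ⟪β • u - f' u, v - u⟫ = β * ⟪u, v - u⟫ - ⟪f' u, v - u⟫ := by
      rw [inner_sub_left, real_inner_smul_left]
    have hnorm : ‖v - u‖ ^ 2 = ‖v‖ ^ 2 - ‖u‖ ^ 2 - 2 * ⟪u, v - u⟫ := by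
      rw [norm_sub_sq_real, inner_sub_right, real_inner_self_eq_norm_sq,
        real_inner_comm u v]
      ring
    rw [hexp] at this
    nlinarith [this]
  -- key inequality
  have key : ∀ x y : H, f y + ⟪f' y, x - y⟫ + 1 / (2 * β) * ‖f' x - f' y‖ ^ 2 ≤ f x := by
    intro x y
    set d := f' x - f' y with hd
    set z := x - β⁻¹ • d with hz
    have h1 : f z ≤ f x + ⟪f' x, z - x⟫ + β / 2 * ‖z - x‖ ^ 2 := descent x z
    have h2 : f y + ⟪f' y, z - y⟫ ≤ f z := convex_grad_lower_bound hconv (hdiff y) z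
    have hzx : z - x = -(β⁻¹ • d) := by rw [hz]; abel
    have e1 : ⟪f' x, z - x⟫ = -(β⁻¹ * ⟪f' x, d⟫) := by
      rw [hzx, inner_neg_right, real_inner_smul_right]
    have e2 : ‖z - x‖ ^ 2 = β⁻¹ ^ 2 * ‖d‖ ^ 2 := by
      rw [hzx, norm_neg, norm_smul, Real.norm_eq_abs, abs_of_pos (inv_pos.mpr hβ)]
      ring
    have e3 : ⟪f' y, z - y⟫ = ⟪f' y, x - y⟫ - β⁻¹ * ⟪f' y, d⟫ := by
      have : z - y = (x - y) - β⁻¹ • d := by rw [hz]; abel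
      rw [this, inner_sub_right, real_inner_smul_right]
    have e4 : ⟪f' x, d⟫ - ⟪f' y, d⟫ = ‖d‖ ^ 2 := by
      rw [← inner_sub_left, ← hd, real_inner_self_eq_norm_sq]
    rw [e1, e2] at h1
    rw [e3] at h2
    have hβ' : β⁻¹ = 1 / β := by rw [one_div]
    have hne : β ≠ 0 := ne_of_gt hβ
    have goal2 : β⁻¹ * ⟪f' x, d⟫ - β⁻¹ * ⟪f' y, d⟫ = β⁻¹ * ‖d‖ ^ 2 := by
      rw [← mul_sub, e4]
    have harith : β / 2 * (β⁻¹ ^ 2 * ‖d‖ ^ 2) = 1 / (2 * β) * ‖d‖ ^ 2 := by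
      field_simp
    have hhalf : β⁻¹ * ‖d‖ ^ 2 - 1 / (2 * β) * ‖d‖ ^ 2 = 1 / (2 * β) * ‖d‖ ^ 2 := by
      field_simp
      ring
    linarith
  intro x y
  have k1 := key x y
  have k2 := key y x
  have hsym : ‖f' y - f' x‖ = ‖f' x - f' y‖ := by rw [norm_sub_rev]
  rw [hsym] at k2
  have hinner : ⟪f' x, y - x⟫ = -⟪f' x, x - y⟫ := by
    rw [← inner_neg_right]; congr 1; abel
  rw [hinner] at k2
  have hco : 1 / β * ‖f' x - f' y‖ ^ 2 ≤ ⟪f' x - f' y, x - y⟫ := by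
    rw [inner_sub_left]
    have : 1 / (2 * β) * ‖f' x - f' y‖ ^ 2 + 1 / (2 * β) * ‖f' x - f' y‖ ^ 2
        = 1 / β * ‖f' x - f' y‖ ^ 2 := by field_simp; ring
    linarith
  have hcs : ⟪f' x - f' y, x - y⟫ ≤ ‖f' x - f' y‖ * ‖x - y‖ := real_inner_le_norm _ _
  rcases eq_or_lt_of_le (norm_nonneg (f' x - f' y)) with h0 | h0
  · rw [← h0]
    positivity
  · have : 1 / β * ‖f' x - f' y‖ ^ 2 ≤ ‖f' x - f' y‖ * ‖x - y‖ := le_trans hco hcs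
    rw [div_mul_eq_mul_div, one_mul, div_le_iff₀ hβ] at this  -- careful direction
    nlinarith
end

section
/- Let f ∈ Γ₀(H) (proper lower semicontinuous convex) and β > 0. If the function g = (β/2)‖·‖² - f is convex (with f finite-valued), then the Fenchel conjugate f* satisfies: f* - (1/(2β))‖·‖² is convex, i.e., f* is 1/β-strongly convex. -/
open RealInnerProductSpace

variable {H : Type*} [NormedAddCommGroup H] [InnerProductSpace ℝ H]

/-- Fenchel conjugate of an extended-real-valued function. -/
noncomputable def econj (f : H → EReal) : H → EReal :=
  fun u => ⨆ x : H, ((⟪x, u⟫ : ℝ) : EReal) - f x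

/-- Convexity for extended-real-valued functions. -/
def EConvexOn (φ : H → EReal) : Prop :=
  ∀ x y : H, ∀ t : ℝ, 0 ≤ t → t ≤ 1 →
    φ (t • x + (1 - t) • y) ≤ ((t : ℝ) : EReal) * φ x + (((1 - t) : ℝ) : EReal) * φ y

set_option maxHeartbeats 1000000

lemma key_real (f : H → ℝ) (β : ℝ) (hβ : 0 < β)
    (hg : ConvexOn ℝ Set.univ (fun x : H => β / 2 * ‖x‖ ^ 2 - f x))
    (u w x : H) (t : ℝ) (ht0 : 0 ≤ t) (ht1 : t ≤ 1) (a b : ℝ)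
    (ha : ⟪x + ((1 - t) / β) • (u - w), u⟫ - f (x + ((1 - t) / β) • (u - w)) ≤ a)
    (hb : ⟪x - (t / β) • (u - w), w⟫ - f (x - (t / β) • (u - w)) ≤ b) :
    ⟪x, t • u + (1 - t) • w⟫ - f x ≤
      t * (a - 1 / (2 * β) * ‖u‖ ^ 2) + (1 - t) * (b - 1 / (2 * β) * ‖w‖ ^ 2)
        + 1 / (2 * β) * ‖t • u + (1 - t) • w‖ ^ 2 := by
  have hβ' : β ≠ 0 := ne_of_gt hβ
  set d : H := (1 / β) • (u - w) with hd
  have hdu : u - w = β • d := by rw [hd, smul_smul]; field_simp; rw [one_smul]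
  have hx1 : x + ((1 - t) / β) • (u - w) = x + (1 - t) • d := by
    rw [hd, smul_smul]; congr 2; ring
  have hx2 : x - (t / β) • (u - w) = x - t • d := by
    rw [hd, smul_smul]; congr 2; ring
  rw [hx1] at ha
  rw [hx2] at hb
  set x₁ : H := x + (1 - t) • d with hX1
  set x₂ : H := x - t • d with hX2
  have hcomb : t • x₁ + (1 - t) • x₂ = x := by rw [hX1, hX2]; module
  have hG := hg.2 (Set.mem_univ x₁) (Set.mem_univ x₂) ht0 (by linarith : (0:ℝ) ≤ 1 - t) (by ring : t + (1 - t) = 1)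
  rw [hcomb] at hG
  simp only [smul_eq_mul] at hG
  have h1 : ‖x₁‖ ^ 2 = ‖x‖ ^ 2 + 2 * ((1 - t) * ⟪x, d⟫) + (1 - t) ^ 2 * ‖d‖ ^ 2 := by
    rw [hX1, norm_add_sq_real, real_inner_smul_right, norm_smul, mul_pow, Real.norm_eq_abs, sq_abs]
  have h2 : ‖x₂‖ ^ 2 = ‖x‖ ^ 2 - 2 * (t * ⟪x, d⟫) + t ^ 2 * ‖d‖ ^ 2 := by
    rw [hX2, norm_sub_sq_real, real_inner_smul_right, norm_smul, mul_pow, Real.norm_eq_abs, sq_abs]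
  have hz : ‖t • u + (1 - t) • w‖ ^ 2
      = t ^ 2 * ‖u‖ ^ 2 + 2 * (t * ((1 - t) * ⟪u, w⟫)) + (1 - t) ^ 2 * ‖w‖ ^ 2 := by
    rw [norm_add_sq_real, real_inner_smul_left, real_inner_smul_right, norm_smul, norm_smul,
      mul_pow, mul_pow, Real.norm_eq_abs, Real.norm_eq_abs, sq_abs, sq_abs]
  have hxz : ⟪x, t • u + (1 - t) • w⟫ = t * ⟪x, u⟫ + (1 - t) * ⟪x, w⟫ := by
    rw [inner_add_right, real_inner_smul_right, real_inner_smul_right]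
  have ha' : ⟪x₁, u⟫ = ⟪x, u⟫ + (1 - t) * ⟪d, u⟫ := by
    rw [hX1, inner_add_left, real_inner_smul_left]
  have hb' : ⟪x₂, w⟫ = ⟪x, w⟫ - t * ⟪d, w⟫ := by
    rw [hX2, inner_sub_left, real_inner_smul_left]
  have hbd : ⟪d, u⟫ - ⟪d, w⟫ = β * ‖d‖ ^ 2 := by
    rw [← inner_sub_right, hdu, real_inner_smul_right, real_inner_self_eq_norm_sq]
  have hpq : ‖u‖ ^ 2 - 2 * ⟪u, w⟫ + ‖w‖ ^ 2 = β ^ 2 * ‖d‖ ^ 2 := by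
    have := norm_sub_sq_real u w
    rw [hdu, norm_smul, mul_pow, Real.norm_eq_abs, sq_abs] at this
    linarith
  -- rewrite the RHS
  have hRHS : t * (a - 1 / (2 * β) * ‖u‖ ^ 2) + (1 - t) * (b - 1 / (2 * β) * ‖w‖ ^ 2)
        + 1 / (2 * β) * ‖t • u + (1 - t) • w‖ ^ 2
      = t * a + (1 - t) * b - β / 2 * (t * (1 - t)) * ‖d‖ ^ 2 := by
    rw [hz]
    field_simp
    linear_combination (-t * (1 - t)) * hpq
  rw [hRHS, hxz]
  rw [ha'] at ha
  rw [hb'] at hb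
  have tha := mul_le_mul_of_nonneg_left ha ht0
  have shb := mul_le_mul_of_nonneg_left hb (by linarith : (0:ℝ) ≤ 1 - t)
  have h5 : t * (1 - t) * (⟪d, u⟫ - ⟪d, w⟫) = t * (1 - t) * (β * ‖d‖ ^ 2) := by rw [hbd]
  rw [h1, h2] at hG
  ring_nf at tha shb hG h5 ⊢
  linarith [tha, shb, hG, h5]

theorem strong_convexity_of_conjugate
    (f : H → ℝ) (β : ℝ) (hβ : 0 < β)
    (hconv : ConvexOn ℝ Set.univ f) (hcont : Continuous f)
    (hg : ConvexOn ℝ Set.univ (fun x : H => β / 2 * ‖x‖ ^ 2 - f x)) :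
    EConvexOn (fun u : H =>
      econj (fun x : H => ((f x : ℝ) : EReal)) u - ((1 / (2 * β) * ‖u‖ ^ 2 : ℝ) : EReal)) := by
  intro u w t ht0 ht1
  dsimp only
  set F : H → EReal := fun x => ((f x : ℝ) : EReal) with hF
  have lb : ∀ v : H, econj F v ≠ ⊥ := by
    intro v
    refine ne_bot_of_le_ne_bot (EReal.coe_ne_bot (0 - f 0)) ?_
    have h := le_iSup (fun x : H => ((⟪x, v⟫ : ℝ) : EReal) - F x) (0 : H)
    simpa [econj, F, ← EReal.coe_sub] using h
  rcases eq_or_lt_of_le ht0 with rfl | ht0'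
  · simp
  rcases eq_or_lt_of_le ht1 with rfl | ht1'
  · simp
  have hs0' : (0:ℝ) < 1 - t := by linarith
  by_cases hAtop : econj F u = ⊤
  · have h1 : ((t:ℝ) : EReal) * (econj F u - ((1 / (2 * β) * ‖u‖ ^ 2 : ℝ) : EReal)) = ⊤ := by
      rw [hAtop, EReal.top_sub_coe, EReal.mul_top_of_pos (EReal.coe_pos.2 ht0')]
    have h2 : (((1 - t : ℝ)) : EReal) * (econj F w - ((1 / (2 * β) * ‖w‖ ^ 2 : ℝ) : EReal)) ≠ ⊥ := by
      by_cases hBtop : econj F w = ⊤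
      · rw [hBtop, EReal.top_sub_coe, EReal.mul_top_of_pos (EReal.coe_pos.2 hs0')]
        exact top_ne_bot
      · lift econj F w to ℝ using ⟨hBtop, lb w⟩ with b hB
        rw [← EReal.coe_sub, ← EReal.coe_mul]
        exact EReal.coe_ne_bot _
    rw [h1, EReal.top_add_of_ne_bot h2]
    exact le_top
  by_cases hBtop : econj F w = ⊤
  · have h1 : (((1 - t : ℝ)) : EReal) * (econj F w - ((1 / (2 * β) * ‖w‖ ^ 2 : ℝ) : EReal)) = ⊤ := by
      rw [hBtop, EReal.top_sub_coe, EReal.mul_top_of_pos (EReal.coe_pos.2 hs0')]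
    have h2 : ((t:ℝ) : EReal) * (econj F u - ((1 / (2 * β) * ‖u‖ ^ 2 : ℝ) : EReal)) ≠ ⊥ := by
      lift econj F u to ℝ using ⟨hAtop, lb u⟩ with a hA
      rw [← EReal.coe_sub, ← EReal.coe_mul]
      exact EReal.coe_ne_bot _
    rw [h1, EReal.add_top_of_ne_bot h2]
    exact le_top
  lift econj F u to ℝ using ⟨hAtop, lb u⟩ with a hA
  lift econj F w to ℝ using ⟨hBtop, lb w⟩ with b hB
  rw [← EReal.coe_sub, ← EReal.coe_sub, ← EReal.coe_mul, ← EReal.coe_mul, ← EReal.coe_add]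
  set R : ℝ := t * (a - 1 / (2 * β) * ‖u‖ ^ 2) + (1 - t) * (b - 1 / (2 * β) * ‖w‖ ^ 2) with hR
  have key : econj F (t • u + (1 - t) • w) ≤
      ((R + 1 / (2 * β) * ‖t • u + (1 - t) • w‖ ^ 2 : ℝ) : EReal) := by
    apply iSup_le
    intro x
    rw [show F x = ((f x : ℝ) : EReal) from rfl, ← EReal.coe_sub, EReal.coe_le_coe_iff]
    have ha : ⟪x + ((1 - t) / β) • (u - w), u⟫ - f (x + ((1 - t) / β) • (u - w)) ≤ a := by
      have h := le_iSup (fun y : H => ((⟪y, u⟫ : ℝ) : EReal) - F y) (x + ((1 - t) / β) • (u - w))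
      rw [show econj F u = ⨆ y : H, ((⟪y, u⟫ : ℝ) : EReal) - F y from rfl] at hA
      rw [← hA] at h
      exact_mod_cast (EReal.coe_sub _ _).symm ▸ h
    have hb : ⟪x - (t / β) • (u - w), w⟫ - f (x - (t / β) • (u - w)) ≤ b := by
      have h := le_iSup (fun y : H => ((⟪y, w⟫ : ℝ) : EReal) - F y) (x - (t / β) • (u - w))
      rw [show econj F w = ⨆ y : H, ((⟪y, w⟫ : ℝ) : EReal) - F y from rfl] at hB
      rw [← hB] at h
      exact_mod_cast (EReal.coe_sub _ _).symm ▸ h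
    have := key_real f β hβ hg u w x t ht0 ht1 a b ha hb
    rw [hR]; linarith
  calc econj F (t • u + (1 - t) • w) - ((1 / (2 * β) * ‖t • u + (1 - t) • w‖ ^ 2 : ℝ) : EReal)
      ≤ ((R + 1 / (2 * β) * ‖t • u + (1 - t) • w‖ ^ 2 : ℝ) : EReal)
        - ((1 / (2 * β) * ‖t • u + (1 - t) • w‖ ^ 2 : ℝ) : EReal) :=
        EReal.sub_le_sub key (le_refl _)
    _ = ((R : ℝ) : EReal) := by rw [← EReal.coe_sub]; norm_num
end

section
/- The Moreau envelope env₁φ(x) = inf_y (φ(y) + ½‖x - y‖²) of φ ∈ Γ₀(H) is Fréchet differentiable on H with gradient ∇env₁φ(x) = x - Prox_φ(x) = Prox_{φ*}(x). -/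
open RealInnerProductSpace

variable {H : Type*} [NormedAddCommGroup H] [InnerProductSpace ℝ H]

/-- Properness for extended-real-valued functions. -/
def EProper (φ : H → EReal) : Prop :=
  (∀ x, φ x ≠ ⊥) ∧ ∃ x, φ x ≠ ⊤

/-- `p` is the proximal point of `φ` at `x`: it minimizes `y ↦ φ y + ½‖x - y‖²`. -/
def IsProxPt (φ : H → EReal) (x p : H) : Prop :=
  ∀ y : H, φ p + ((1 / 2 * ‖x - p‖ ^ 2 : ℝ) : EReal) ≤ φ y + ((1 / 2 * ‖x - y‖ ^ 2 : ℝ) : EReal)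

set_option linter.unusedSectionVars false

/-- A function squeezed quadratically around an affine approximation has that gradient. -/
lemma hasGradientAt_of_sandwich [CompleteSpace H] (f : H → ℝ) (x u : H)
    (h : ∀ z, |f z - f x - ⟪u, z - x⟫| ≤ 1/2 * ‖z - x‖^2) : HasGradientAt f u x := by
  rw [hasGradientAt_iff_hasFDerivAt]
  rw [hasFDerivAt_iff_isLittleO_nhds_zero]
  rw [Asymptotics.isLittleO_iff]
  intro c hc
  filter_upwards [Metric.ball_mem_nhds (0 : H) (by linarith : (0:ℝ) < 2*c)] with v hv
  have h2 := h (x + v)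
  simp only [add_sub_cancel_left] at h2
  rw [mem_ball_zero_iff] at hv
  have : (InnerProductSpace.toDual ℝ H u) v = ⟪u, v⟫ := rfl
  rw [Real.norm_eq_abs, this]
  have hn : (0:ℝ) ≤ ‖v‖ := norm_nonneg v
  calc |f (x + v) - f x - ⟪u, v⟫| ≤ 1/2 * ‖v‖^2 := h2
    _ ≤ c * ‖v‖ := by nlinarith

/-- The value of `φ` at a prox point, in terms of the envelope value. -/
lemma prox_val (φ : H → EReal) (hb : ∀ y, φ y ≠ ⊥) {x px : H} (hpx : IsProxPt φ x px)
    {ex : ℝ} (hex : (ex : EReal) = ⨅ y : H, φ y + ((1 / 2 * ‖x - y‖ ^ 2 : ℝ) : EReal)) :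
    φ px = ((ex - 1 / 2 * ‖x - px‖ ^ 2 : ℝ) : EReal) := by
  have h1 : (ex : EReal) = φ px + ((1 / 2 * ‖x - px‖ ^ 2 : ℝ) : EReal) := by
    rw [hex]
    exact le_antisymm (iInf_le _ px) (le_iInf hpx)
  have hne : φ px ≠ ⊤ := by
    intro h; rw [h, EReal.top_add_coe] at h1; exact EReal.coe_ne_top ex h1
  have hr : φ px = ((φ px).toReal : EReal) := (EReal.coe_toReal hne (hb px)).symm
  rw [hr] at h1 ⊢
  rw [← EReal.coe_add] at h1
  have := EReal.coe_eq_coe_iff.mp h1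
  norm_cast
  linarith

/-- The subgradient inequality at a prox point: `x - px ∈ ∂φ(px)`. -/
lemma prox_subgrad (φ : H → EReal) (hb : ∀ y, φ y ≠ ⊥) (hconv : EConvexOn φ)
    {x px : H} (hpx : IsProxPt φ x px) {a : ℝ} (ha : φ px = (a : EReal)) (y : H) :
    ((a + ⟪x - px, y - px⟫ : ℝ) : EReal) ≤ φ y := by
  by_cases hy : φ y = ⊤
  · rw [hy]; exact le_top
  have hyr : φ y = ((φ y).toReal : EReal) := (EReal.coe_toReal hy (hb y)).symm
  set b := (φ y).toReal with hbdef
  rw [hyr]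
  rw [EReal.coe_le_coe_iff]
  set u := x - px with hu
  set w := y - px with hw
  have key : ∀ t : ℝ, 0 < t → t ≤ 1 → ⟪u, w⟫ ≤ b - a + t/2 * ‖w‖^2 := by
    intro t ht0 ht1
    have hcv := hconv y px t ht0.le ht1
    have hpp := hpx (t • y + (1-t) • px)
    rw [ha, hyr, ← EReal.coe_mul, ← EReal.coe_mul, ← EReal.coe_add] at hcv
    have harg : x - (t • y + (1-t) • px) = u - t • w := by
      rw [hu, hw]; module
    rw [harg] at hpp
    have hchain := le_trans hpp (add_le_add hcv (le_refl ((1 / 2 * ‖u - t • w‖ ^ 2 : ℝ) : EReal)))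
    rw [ha, ← EReal.coe_add, ← EReal.coe_add, EReal.coe_le_coe_iff] at hchain
    have hexp : ‖u - t • w‖^2 = ‖u‖^2 - 2 * (t * ⟪u, w⟫) + t^2 * ‖w‖^2 := by
      rw [norm_sub_sq_real, real_inner_smul_right, norm_smul]
      rw [Real.norm_eq_abs, mul_pow, sq_abs]
    rw [hexp] at hchain
    have ht : t * ⟪u,w⟫ ≤ t * (b - a) + t^2/2 * ‖w‖^2 := by nlinarith
    nlinarith
  by_contra hlt
  push_neg at hlt
  set ε := ⟪u, w⟫ - (b - a) with hε
  have hε0 : 0 < ε := by simp [hε]; linarith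
  have hc0 : (0:ℝ) < ‖w‖^2 + 1 := by positivity
  set t := min 1 (ε / (‖w‖^2 + 1)) with htdef
  have ht0 : 0 < t := lt_min one_pos (by positivity)
  have ht1 : t ≤ 1 := min_le_left _ _
  have h2 := key t ht0 ht1
  have h3 : t ≤ ε / (‖w‖^2 + 1) := min_le_right _ _
  have h4 : t * (‖w‖^2 + 1) ≤ ε := (le_div_iff₀ hc0).mp h3
  have hw2 : (0:ℝ) ≤ ‖w‖^2 := sq_nonneg _
  nlinarith

/-- Value of the conjugate at a subgradient (Fenchel equality). -/
lemma econj_val (φ : H → EReal) (hb : ∀ y, φ y ≠ ⊥) {px : H} {a : ℝ} (ha : φ px = (a : EReal))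
    (u : H) (hsub : ∀ y : H, ((a + ⟪u, y - px⟫ : ℝ) : EReal) ≤ φ y) :
    econj φ u = ((⟪px, u⟫ - a : ℝ) : EReal) := by
  apply le_antisymm
  · apply iSup_le
    intro y
    by_cases hy : φ y = ⊤
    · rw [hy]; simp
    · have hyr : φ y = ((φ y).toReal : EReal) := (EReal.coe_toReal hy (hb y)).symm
      rw [hyr, ← EReal.coe_sub, EReal.coe_le_coe_iff]
      have h2 := hsub y
      rw [hyr, EReal.coe_le_coe_iff] at h2
      have h3 : ⟪u, y - px⟫ = ⟪u, y⟫ - ⟪u, px⟫ := inner_sub_right u y px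
      have h4 : ⟪y, u⟫ = ⟪u, y⟫ := (real_inner_comm y u).symm
      have h5 : ⟪px, u⟫ = ⟪u, px⟫ := (real_inner_comm px u).symm
      linarith
  · have h1 := le_iSup (fun y => ((⟪y, u⟫ : ℝ) : EReal) - φ y) px
    rw [ha, ← EReal.coe_sub] at h1
    exact h1

/-- Midpoint convexity of the conjugate at finite points. -/
lemma econj_midpt (φ : H → EReal) (hb : ∀ y, φ y ≠ ⊥) {u v : H} {c₁ c₂ : ℝ}
    (h1 : econj φ u = (c₁ : EReal)) (h2 : econj φ v = (c₂ : EReal)) :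
    econj φ ((1/2 : ℝ) • u + (1/2 : ℝ) • v) ≤ ((c₁/2 + c₂/2 : ℝ) : EReal) := by
  apply iSup_le
  intro y
  by_cases hy : φ y = ⊤
  · rw [hy]; simp
  · have hyr : φ y = ((φ y).toReal : EReal) := (EReal.coe_toReal hy (hb y)).symm
    set b := (φ y).toReal
    rw [hyr, ← EReal.coe_sub, EReal.coe_le_coe_iff]
    have hu : ((⟪y, u⟫ - b : ℝ) : EReal) ≤ (c₁ : EReal) := by
      rw [← h1]
      have := le_iSup (fun z => ((⟪z, u⟫ : ℝ) : EReal) - φ z) y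
      rwa [hyr, ← EReal.coe_sub] at this
    have hv : ((⟪y, v⟫ - b : ℝ) : EReal) ≤ (c₂ : EReal) := by
      rw [← h2]
      have := le_iSup (fun z => ((⟪z, v⟫ : ℝ) : EReal) - φ z) y
      rwa [hyr, ← EReal.coe_sub] at this
    rw [EReal.coe_le_coe_iff] at hu hv
    have hin : ⟪y, (1/2 : ℝ) • u + (1/2 : ℝ) • v⟫ = 1/2 * ⟪y, u⟫ + 1/2 * ⟪y, v⟫ := by
      rw [inner_add_right, real_inner_smul_right, real_inner_smul_right]
    rw [hin]
    linarith

/-- Moreau decomposition: `x - px` is a prox point of the conjugate at `x`. -/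
lemma moreau_prox (φ : H → EReal) (hb : ∀ y, φ y ≠ ⊥) {x px : H} {a : ℝ}
    (ha : φ px = (a : EReal))
    (hsub : ∀ y : H, ((a + ⟪x - px, y - px⟫ : ℝ) : EReal) ≤ φ y) :
    IsProxPt (econj φ) x (x - px) := by
  intro y
  have hval := econj_val φ hb ha (x - px) hsub
  have hxq : x - (x - px) = px := by abel
  rw [hval, hxq, ← EReal.coe_add]
  have hlb : ((⟪px, y⟫ - a : ℝ) : EReal) ≤ econj φ y := by
    have h1 := le_iSup (fun z => ((⟪z, y⟫ : ℝ) : EReal) - φ z) px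
    rwa [ha, ← EReal.coe_sub] at h1
  refine le_trans ?_ (add_le_add hlb (le_refl ((1 / 2 * ‖x - y‖ ^ 2 : ℝ) : EReal)))
  rw [← EReal.coe_add, EReal.coe_le_coe_iff]
  set u := x - px
  have hxy : x - y = (u - y) + px := by simp [u]; abel
  rw [hxy, norm_add_sq_real]
  have h3 : ⟪u - y, px⟫ = ⟪px, u⟫ - ⟪px, y⟫ := by
    rw [real_inner_comm, inner_sub_right]
  have h4 : ⟪px, x - px⟫ = ⟪px, u⟫ := rfl
  nlinarith [sq_nonneg ‖u - y‖]

/-- Uniqueness of prox points of the conjugate. -/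
lemma prox_unique (φ : H → EReal) (hb : ∀ y, φ y ≠ ⊥) {x q s : H} {c₁ : ℝ}
    (hq : IsProxPt (econj φ) x q) (hs : IsProxPt (econj φ) x s)
    (hcq : econj φ q = (c₁ : EReal))
    (hbot : ∀ z : H, econj φ z ≠ ⊥) : q = s := by
  have hsq := hs q
  have hstop : econj φ s ≠ ⊤ := by
    intro h
    rw [h, hcq, EReal.top_add_coe, ← EReal.coe_add, top_le_iff] at hsq
    exact EReal.coe_ne_top _ hsq
  have hcs : econj φ s = (((econj φ s).toReal : ℝ) : EReal) := (EReal.coe_toReal hstop (hbot s)).symm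
  set c₂ := (econj φ s).toReal with hc2
  set mid := (1/2 : ℝ) • q + (1/2 : ℝ) • s with hmid
  have hm := econj_midpt φ hb hcq hcs
  have hmtop : econj φ mid ≠ ⊤ := fun h => by
    rw [hmid] at h; rw [h, top_le_iff] at hm; exact EReal.coe_ne_top _ hm
  have hcm : econj φ mid = (((econj φ mid).toReal : ℝ) : EReal) :=
    (EReal.coe_toReal hmtop (hbot mid)).symm
  set cm := (econj φ mid).toReal with hcmdef
  rw [← hmid] at hm
  rw [hcm, EReal.coe_le_coe_iff] at hm
  have hqm := hq mid
  rw [hcq, hcm, ← EReal.coe_add, ← EReal.coe_add, EReal.coe_le_coe_iff] at hqm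
  have hsm := hs mid
  rw [hcs, hcm, ← EReal.coe_add, ← EReal.coe_add, EReal.coe_le_coe_iff] at hsm
  have hxmid : x - mid = (1/2 : ℝ) • ((x - q) + (x - s)) := by rw [hmid]; module
  have hnm : ‖x - mid‖^2 = 1/4 * ‖(x - q) + (x - s)‖^2 := by
    rw [hxmid, norm_smul, Real.norm_eq_abs, mul_pow, sq_abs]; ring
  have hadd : ‖(x - q) + (x - s)‖^2
      = ‖x - q‖^2 + 2 * ⟪x - q, x - s⟫ + ‖x - s‖^2 := norm_add_sq_real _ _
  have hsub2 : ‖(x - q) - (x - s)‖^2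
      = ‖x - q‖^2 - 2 * ⟪x - q, x - s⟫ + ‖x - s‖^2 := norm_sub_sq_real _ _
  have hdq : (x - q) - (x - s) = s - q := by abel
  rw [hdq] at hsub2
  have hD : ‖s - q‖^2 ≤ 0 := by nlinarith
  have hD0 : ‖s - q‖^2 = 0 := le_antisymm hD (sq_nonneg _)
  have hz : s - q = 0 := by
    rw [pow_eq_zero_iff (by norm_num : 2 ≠ 0), norm_eq_zero] at hD0; exact hD0
  exact (sub_eq_zero.mp hz).symm

theorem moreau_envelope_differentiable
    [CompleteSpace H]
    (φ : H → EReal)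
    (hproper : EProper φ) (hlsc : LowerSemicontinuous φ) (hconv : EConvexOn φ)
    (p : H → H) (hp : ∀ x : H, IsProxPt φ x (p x))
    (pstar : H → H) (hpstar : ∀ x : H, IsProxPt (econj φ) x (pstar x))
    (e : H → ℝ)
    (he : ∀ x : H, (e x : EReal) = ⨅ y : H, φ y + ((1 / 2 * ‖x - y‖ ^ 2 : ℝ) : EReal)) :
    ∀ x : H, HasGradientAt e (x - p x) x ∧ x - p x = pstar x := by
  have hb := hproper.1
  -- the value function
  set a : H → ℝ := fun z => e z - 1 / 2 * ‖z - p z‖ ^ 2 with hadef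
  have hval : ∀ z, φ (p z) = ((a z : ℝ) : EReal) := fun z => prox_val φ hb (hp z) (he z)
  have hsub : ∀ z y, ((a z + ⟪z - p z, y - p z⟫ : ℝ) : EReal) ≤ φ y := fun z y =>
    prox_subgrad φ hb hconv (hp z) (hval z) y
  -- real subgradient inequality between prox values
  have hsubr : ∀ z y, a z + ⟪z - p z, p y - p z⟫ ≤ a y := by
    intro z y
    have h := hsub z (p y)
    rw [hval y, EReal.coe_le_coe_iff] at h
    exact h
  -- envelope upper bound
  have hup : ∀ x z, e z ≤ a x + 1/2 * ‖z - p x‖^2 := by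
    intro x z
    have h : (e z : EReal) ≤ φ (p x) + ((1 / 2 * ‖z - p x‖ ^ 2 : ℝ) : EReal) := by
      rw [he z]; exact iInf_le _ (p x)
    rw [hval x, ← EReal.coe_add, EReal.coe_le_coe_iff] at h
    linarith
  intro x
  set u := x - p x with hu
  have hex : e x = a x + 1/2 * ‖u‖^2 := by rw [hadef]; ring
  constructor
  · -- gradient
    apply hasGradientAt_of_sandwich
    intro z
    rw [abs_le]
    set vz := z - p z with hvz
    have hez : e z = a z + 1/2 * ‖vz‖^2 := by rw [hadef]; ring
    constructor
    · -- lower bound : e x + ⟪u, z - x⟫ ≤ e z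
      have h1 := hsubr x z
      have hrw : p z - p x = (z - x) + (u - vz) := by rw [hu, hvz]; abel
      have h2 : ⟪u, p z - p x⟫ = ⟪u, z - x⟫ + (⟪u, u⟫ - ⟪u, vz⟫) := by
        rw [hrw, inner_add_right, inner_sub_right u u vz]
      have h3 : ⟪u, u⟫ = ‖u‖^2 := real_inner_self_eq_norm_sq u
      have h4 : ‖u - vz‖^2 = ‖u‖^2 - 2 * ⟪u, vz⟫ + ‖vz‖^2 := norm_sub_sq_real u vz
      have h5 : (0:ℝ) ≤ ‖u - vz‖^2 := sq_nonneg _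
      have h6 : (0:ℝ) ≤ 1/2 * ‖z - x‖^2 := by positivity
      rw [← hu] at h1
      rw [h2] at h1
      have k1 : (0:ℝ) ≤ 1/2*‖u‖^2 - ⟪u, vz⟫ + 1/2*‖vz‖^2 := by linarith
      rw [h3] at h1
      clear_value u vz a
      have k2 : e x + ⟪u, z - x⟫ ≤ e z := by linarith [hex, hez, h1]
      linarith
    · -- upper bound
      have h1 := hup x z
      have hrw : z - p x = (z - x) + u := by rw [hu]; abel
      have h2 : ‖z - p x‖^2 = ‖z - x‖^2 + 2 * ⟪z - x, u⟫ + ‖u‖^2 := by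
        rw [hrw]; exact norm_add_sq_real _ _
      have h3 : ⟪z - x, u⟫ = ⟪u, z - x⟫ := real_inner_comm _ _
      linarith
  · -- Moreau decomposition
    have hqprox : IsProxPt (econj φ) x u := moreau_prox φ hb (hval x) (hsub x)
    have hcq : econj φ u = ((⟪p x, u⟫ - a x : ℝ) : EReal) :=
      econj_val φ hb (hval x) u (hsub x)
    have hbot : ∀ z, econj φ z ≠ ⊥ := by
      intro z hzbot
      have h1 : ((⟪p x, z⟫ - a x : ℝ) : EReal) ≤ econj φ z := by
        have h2 := le_iSup (fun w => ((⟪w, z⟫ : ℝ) : EReal) - φ w) (p x)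
        rw [hval x, ← EReal.coe_sub] at h2
        exact h2
      rw [hzbot, le_bot_iff] at h1
      exact EReal.coe_ne_bot _ h1
    exact prox_unique φ hb hqprox (hpstar x) hcq hbot
end

section
/- Let f : H → ℝ be convex Fréchet differentiable with ∇f β-Lipschitz, and set h = f* - (1/(2β))‖·‖². Then h is proper lsc convex and ∇f(x) = β(x - Prox_{h*/β}(x)) for all x ∈ H; in particular ∇f = Prox_{βh} ∘ (β Id). -/
open RealInnerProductSpace

variable {H : Type*} [NormedAddCommGroup H] [InnerProductSpace ℝ H]

/-! ### Auxiliary lemmas -/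

section Aux

lemma aux_ereal_iSup_sub {ι : Type*} [Nonempty ι] (a : ι → EReal) (r : ℝ) :
    (⨆ i, a i) - (r : EReal) = ⨆ i, (a i - (r : EReal)) := by
  apply le_antisymm
  · rw [EReal.sub_le_iff_le_add (Or.inl (EReal.coe_ne_bot r)) (Or.inl (EReal.coe_ne_top r))]
    refine iSup_le fun i => ?_
    calc a i = (a i - (r : EReal)) + (r : EReal) := EReal.sub_add_cancel.symm
    _ ≤ (⨆ i, (a i - (r : EReal))) + (r : EReal) :=
        add_le_add (le_iSup (fun i => a i - (r : EReal)) i) le_rfl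
  · exact iSup_le fun i => EReal.sub_le_sub (le_iSup a i) le_rfl

lemma aux_ereal_exists_real {x : EReal} {r : ℝ} (h1 : (r : EReal) ≤ x) (h2 : x ≠ ⊤) :
    ∃ s : ℝ, x = (s : EReal) := by
  lift x to ℝ using ⟨h2, fun hbot => by simp [hbot] at h1⟩
  exact ⟨x, rfl⟩

lemma aux_combo_norm_sq (A B : H) (t : ℝ) :
    ‖t • A + (1 - t) • B‖ ^ 2
      = t ^ 2 * ‖A‖ ^ 2 + 2 * (t * (1 - t)) * ⟪A, B⟫ + (1 - t) ^ 2 * ‖B‖ ^ 2 := by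
  rw [norm_add_sq_real, norm_smul, norm_smul, real_inner_smul_left, real_inner_smul_right,
    mul_pow, mul_pow]
  simp only [Real.norm_eq_abs, sq_abs]
  ring

/-- derivative along a line -/
lemma aux_line_hasDerivAt [CompleteSpace H] {f : H → ℝ} {g : H} {c d : H} {t : ℝ}
    (hg : HasGradientAt f g (c + t • d)) :
    HasDerivAt (fun s : ℝ => f (c + s • d)) ⟪g, d⟫ t := by
  have hline : HasDerivAt (fun s : ℝ => c + s • d) d t := by
    simpa using ((hasDerivAt_id t).smul_const d).const_add c
  have := (hg.hasFDerivAt).comp_hasDerivAt t hline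
  simp [InnerProductSpace.toDual_apply_apply] at this
  exact this

/-- convexity along lines -/
lemma aux_line_convexOn {f : H → ℝ} (hconv : ConvexOn ℝ Set.univ f) (c d : H) :
    ConvexOn ℝ Set.univ (fun s : ℝ => f (c + s • d)) := by
  refine ⟨convex_univ, fun a _ b _ s t hs ht hst => ?_⟩
  have h1 : s • (c + a • d) + t • (c + b • d) = (s + t) • c + (s * a + t * b) • d := by
    module
  have h2 : c + (s * a + t * b) • d = s • (c + a • d) + t • (c + b • d) := by
    rw [h1, hst, one_smul]
  simpa [h2] using hconv.2 (Set.mem_univ (c + a • d)) (Set.mem_univ (c + b • d)) hs ht hst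

/-- subgradient inequality -/
lemma aux_subgrad [CompleteSpace H] {f : H → ℝ} {g : H} {x : H}
    (hconv : ConvexOn ℝ Set.univ f)
    (hg : HasGradientAt f g x) (z : H) : f x + ⟪g, z - x⟫ ≤ f z := by
  have hφ : ConvexOn ℝ Set.univ (fun s : ℝ => f (x + s • (z - x))) :=
    aux_line_convexOn hconv x _
  have hd : HasDerivAt (fun s : ℝ => f (x + s • (z - x))) ⟪g, z - x⟫ 0 := by
    apply aux_line_hasDerivAt; simpa using hg
  have := hφ.le_slope_of_hasDerivAt (Set.mem_univ 0) (Set.mem_univ 1) zero_lt_one hd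
  simp only [slope_def_field] at this
  simp only [zero_smul, add_zero, one_smul] at this
  have h1 : x + (z - x) = z := by abel
  rw [h1] at this
  simp at this
  linarith

/-- monotone gradient implies convex -/
lemma aux_convex_of_mono_grad [CompleteSpace H] {f : H → ℝ} {g : H → H}
    (hdiff : ∀ x, HasGradientAt f (g x) x)
    (hmono : ∀ x y, 0 ≤ ⟪g x - g y, x - y⟫) : ConvexOn ℝ Set.univ f := by
  refine ⟨convex_univ, fun x _ y _ s t hs ht hst => ?_⟩
  set ψ : ℝ → ℝ := fun u => f (y + u • (x - y)) with hψ
  have hd : ∀ u : ℝ, HasDerivAt ψ ⟪g (y + u • (x - y)), x - y⟫ u :=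
    fun u => aux_line_hasDerivAt (hdiff _)
  have hdiffψ : Differentiable ℝ ψ := fun u => (hd u).differentiableAt
  have hderiv : ∀ u, deriv ψ u = ⟪g (y + u • (x - y)), x - y⟫ := fun u => (hd u).deriv
  have hmonoψ : Monotone (deriv ψ) := by
    intro u v huv
    rw [hderiv, hderiv]
    rcases eq_or_lt_of_le huv with rfl | huv
    · exact le_rfl
    have := hmono (y + v • (x - y)) (y + u • (x - y))
    have he : (y + v • (x - y)) - (y + u • (x - y)) = (v - u) • (x - y) := by module
    rw [he, inner_smul_right, inner_sub_left] at this
    nlinarith [this]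
  have hc : ConvexOn ℝ Set.univ ψ := Monotone.convexOn_univ_of_deriv hdiffψ hmonoψ
  have := hc.2 (Set.mem_univ (1:ℝ)) (Set.mem_univ (0:ℝ)) hs ht hst
  simp only [hψ, smul_eq_mul] at this
  have e1 : y + (1:ℝ) • (x - y) = x := by module
  have e2 : y + (0:ℝ) • (x - y) = y := by module
  have e3 : y + (s * 1 + t * 0) • (x - y) = s • x + t • y := by
    have : (s * 1 + t * 0) = s := by ring
    rw [this]
    have hy : y = (s + t) • y := by rw [hst, one_smul]
    nth_rewrite 1 [hy]
    module
  rw [e1, e2, e3] at this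
  simpa using this

lemma aux_quad_grad [CompleteSpace H] {f : H → ℝ} {f' : H → H} {β : ℝ}
    (hdiff : ∀ x, HasGradientAt f (f' x) x) (u : H) :
    HasGradientAt (fun v : H => β / 2 * ‖v‖ ^ 2 - f v) (β • u - f' u) u := by
  have h1 : HasFDerivAt (fun v : H => ‖v‖ ^ 2) (2 • (innerSL ℝ u)) u := by
    simpa using (hasFDerivAt_id u).norm_sq
  have h2 := (h1.const_mul (β / 2)).sub (hdiff u).hasFDerivAt
  rw [hasGradientAt_iff_hasFDerivAt]
  refine h2.congr_fderiv ?_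
  ext v
  simp [InnerProductSpace.toDual_apply_apply, inner_sub_left, inner_smul_left, real_inner_comm]
  ring

/-- descent lemma -/
lemma aux_descent [CompleteSpace H] {f : H → ℝ} {f' : H → H} {β : ℝ}
    (hdiff : ∀ x, HasGradientAt f (f' x) x)
    (hlip : ∀ x y, ‖f' x - f' y‖ ≤ β * ‖x - y‖)
    (x z : H) : f z ≤ f x + ⟪f' x, z - x⟫ + β / 2 * ‖z - x‖ ^ 2 := by
  set F : H → ℝ := fun v => β / 2 * ‖v‖ ^ 2 - f v with hF
  have hmono : ∀ a b, 0 ≤ ⟪(β • a - f' a) - (β • b - f' b), a - b⟫ := by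
    intro a b
    have h1 : (β • a - f' a) - (β • b - f' b) = β • (a - b) - (f' a - f' b) := by module
    rw [h1, inner_sub_left, real_inner_smul_left, real_inner_self_eq_norm_sq]
    have h2 : ⟪f' a - f' b, a - b⟫ ≤ ‖f' a - f' b‖ * ‖a - b‖ := real_inner_le_norm _ _
    have h3 := hlip a b
    nlinarith [norm_nonneg (a - b)]
  have hconvF : ConvexOn ℝ Set.univ F :=
    aux_convex_of_mono_grad (aux_quad_grad hdiff) hmono
  have := aux_subgrad hconvF (aux_quad_grad hdiff x) z
  simp only [hF] at this
  rw [inner_sub_left, real_inner_smul_left] at this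
  have h4 : ⟪x, z - x⟫ = ⟪x, z⟫ - ‖x‖^2 := by
    rw [inner_sub_right, real_inner_self_eq_norm_sq]
  have hc : ⟪z, x⟫ = ⟪x, z⟫ := real_inner_comm _ _
  have hns : ‖z - x‖ ^ 2 = ‖z‖ ^ 2 - 2 * ⟪x, z - x⟫ - ‖x‖ ^ 2 := by
    have h6 := norm_sub_sq_real z x
    rw [hc] at h6
    linarith
  rw [hns]
  linarith

/-- F1 : the conjugate dominates each affine minorant value -/
lemma aux_fs_ge (f : H → ℝ) (x u : H) :
    ((⟪x, u⟫ - f x : ℝ) : EReal) ≤ econj (fun x : H => ((f x : ℝ) : EReal)) u := by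
  have := le_iSup (fun z : H => ((⟪z, u⟫ : ℝ) : EReal) - ((f z : ℝ) : EReal)) x
  rwa [← EReal.coe_sub] at this

/-- F2 : value of the conjugate at a gradient -/
lemma aux_fs_grad [CompleteSpace H] {f : H → ℝ} {f' : H → H}
    (hconv : ConvexOn ℝ Set.univ f)
    (hdiff : ∀ x : H, HasGradientAt f (f' x) x) (x : H) :
    econj (fun x : H => ((f x : ℝ) : EReal)) (f' x) = ((⟪x, f' x⟫ - f x : ℝ) : EReal) := by
  refine le_antisymm (iSup_le fun z => ?_) (aux_fs_ge f x (f' x))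
  rw [← EReal.coe_sub, EReal.coe_le_coe_iff]
  have h1 := aux_subgrad hconv (hdiff x) z
  have h2 : ⟪f' x, z - x⟫ = ⟪z, f' x⟫ - ⟪x, f' x⟫ := by
    rw [inner_sub_right, real_inner_comm (f' x) z, real_inner_comm (f' x) x]
  linarith

/-- F3 : strong lower bound for the conjugate -/
lemma aux_fs_lower [CompleteSpace H] {f : H → ℝ} {f' : H → H} {β : ℝ} (hβ : 0 < β)
    (hdiff : ∀ x : H, HasGradientAt f (f' x) x)
    (hlip : ∀ x y : H, ‖f' x - f' y‖ ≤ β * ‖x - y‖) (x w : H) :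
    ((⟪x, w⟫ - f x + 1 / (2 * β) * ‖w - f' x‖ ^ 2 : ℝ) : EReal) ≤
      econj (fun x : H => ((f x : ℝ) : EReal)) w := by
  refine le_trans ?_ (aux_fs_ge f (x + β⁻¹ • (w - f' x)) w)
  rw [EReal.coe_le_coe_iff]
  set z := x + β⁻¹ • (w - f' x) with hz
  have hd := aux_descent hdiff hlip x z
  have e1 : ⟪z, w⟫ = ⟪x, w⟫ + β⁻¹ * (⟪w, w⟫ - ⟪f' x, w⟫) := by
    rw [hz, inner_add_left, real_inner_smul_left, inner_sub_left]
  have e2 : z - x = β⁻¹ • (w - f' x) := by rw [hz]; abel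
  have e3 : ⟪f' x, z - x⟫ = β⁻¹ * (⟪f' x, w⟫ - ⟪f' x, f' x⟫) := by
    rw [e2, real_inner_smul_right, inner_sub_right]
  have e4 : ‖z - x‖ ^ 2 = β⁻¹ ^ 2 * ‖w - f' x‖ ^ 2 := by
    rw [e2, norm_smul]
    simp [abs_of_pos (inv_pos.2 hβ), mul_pow]
  have e5 : ‖w - f' x‖ ^ 2 = ⟪w, w⟫ - 2 * ⟪f' x, w⟫ + ⟪f' x, f' x⟫ := by
    rw [← real_inner_self_eq_norm_sq, inner_sub_left, inner_sub_right, inner_sub_right]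
    rw [real_inner_comm w (f' x)]
    ring
  rw [e3, e4, e5] at hd
  rw [e1, e5]
  have hβ' : β ≠ 0 := ne_of_gt hβ
  have k1 : β / 2 * β⁻¹ ^ 2 = β⁻¹ / 2 := by field_simp
  have k2 : 1 / (2 * β) = β⁻¹ / 2 := by field_simp
  have k3 : β / 2 * (β⁻¹ ^ 2 * (⟪w, w⟫ - 2 * ⟪f' x, w⟫ + ⟪f' x, f' x⟫)) =
      β⁻¹ / 2 * (⟪w, w⟫ - 2 * ⟪f' x, w⟫ + ⟪f' x, f' x⟫) := by rw [← mul_assoc, k1]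
  rw [k3] at hd
  rw [k2]
  linarith

/-- properness of h -/
lemma aux_h_proper [CompleteSpace H] {f : H → ℝ} {f' : H → H} {β : ℝ}
    (hconv : ConvexOn ℝ Set.univ f)
    (hdiff : ∀ x : H, HasGradientAt f (f' x) x) :
    EProper (fun u : H =>
      econj (fun z : H => ((f z : ℝ) : EReal)) u - ((1 / (2 * β) * ‖u‖ ^ 2 : ℝ) : EReal)) := by
  constructor
  · intro u
    beta_reduce
    rcases eq_or_ne (econj (fun z : H => ((f z : ℝ) : EReal)) u) ⊤ with hu | hu
    · rw [hu, EReal.top_sub_coe]; exact top_ne_bot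
    · obtain ⟨s, hs⟩ := aux_ereal_exists_real (aux_fs_ge f 0 u) hu
      rw [hs, ← EReal.coe_sub]; exact EReal.coe_ne_bot _
  · refine ⟨f' 0, ?_⟩
    beta_reduce
    rw [aux_fs_grad hconv hdiff 0, ← EReal.coe_sub]
    exact EReal.coe_ne_top _

/-- lower semicontinuity of h -/
lemma aux_h_lsc (f : H → ℝ) (β : ℝ) :
    LowerSemicontinuous (fun u : H =>
      econj (fun z : H => ((f z : ℝ) : EReal)) u - ((1 / (2 * β) * ‖u‖ ^ 2 : ℝ) : EReal)) := by
  have : Nonempty H := ⟨0⟩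
  have hrw : (fun u : H =>
      econj (fun z : H => ((f z : ℝ) : EReal)) u - ((1 / (2 * β) * ‖u‖ ^ 2 : ℝ) : EReal))
      = fun u : H => ⨆ x : H, ((⟪x, u⟫ - f x - 1 / (2 * β) * ‖u‖ ^ 2 : ℝ) : EReal) := by
    funext u
    rw [show econj (fun z : H => ((f z : ℝ) : EReal)) u
        = ⨆ x : H, ((⟪x, u⟫ : ℝ) : EReal) - ((f x : ℝ) : EReal) from rfl,
      aux_ereal_iSup_sub]
    refine iSup_congr fun x => ?_
    rw [← EReal.coe_sub, ← EReal.coe_sub]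
  rw [hrw]
  refine lowerSemicontinuous_iSup fun x => ?_
  refine Continuous.lowerSemicontinuous ?_
  refine continuous_coe_real_ereal.comp ?_
  have h1 : Continuous fun u : H => ⟪x, u⟫ := (innerSL ℝ x).continuous
  have h2 : Continuous fun u : H => ‖u‖ ^ 2 := by fun_prop
  continuity

/-- convexity of h -/
lemma aux_h_econvex [CompleteSpace H] {f : H → ℝ} {f' : H → H} {β : ℝ} (hβ : 0 < β)
    (hdiff : ∀ x : H, HasGradientAt f (f' x) x)
    (hlip : ∀ x y : H, ‖f' x - f' y‖ ≤ β * ‖x - y‖) :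
    EConvexOn (fun u : H =>
      econj (fun x : H => ((f x : ℝ) : EReal)) u - ((1 / (2 * β) * ‖u‖ ^ 2 : ℝ) : EReal)) := by
  have hc0 : 0 ≤ 1 / (2 * β) := by positivity
  set c : ℝ := 1 / (2 * β) with hc
  set fs : H → EReal := econj (fun x : H => ((f x : ℝ) : EReal)) with hfs
  have hne_bot : ∀ y : H, fs y - ((c * ‖y‖ ^ 2 : ℝ) : EReal) ≠ ⊥ := by
    intro y
    rcases eq_or_ne (fs y) ⊤ with hyt | hyn
    · rw [hyt, EReal.top_sub_coe]; exact top_ne_bot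
    · obtain ⟨s, hs⟩ := aux_ereal_exists_real (aux_fs_ge f 0 y) hyn
      rw [← hfs] at hs
      rw [hs, ← EReal.coe_sub]; exact EReal.coe_ne_bot _
  intro x y t ht0 ht1
  rcases eq_or_lt_of_le ht0 with rfl | ht0'
  · norm_num
  rcases eq_or_lt_of_le ht1 with rfl | ht1'
  · norm_num
  have ht1'' : (0:ℝ) < 1 - t := by linarith
  by_cases hx : fs x = ⊤
  · have h1 : ((t : ℝ) : EReal) * (fs x - ((c * ‖x‖ ^ 2 : ℝ) : EReal)) = ⊤ := by
      rw [hx, EReal.top_sub_coe, EReal.coe_mul_top_of_pos ht0']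
    rw [h1]
    have h2 : (((1 - t : ℝ)) : EReal) * (fs y - ((c * ‖y‖ ^ 2 : ℝ) : EReal)) ≠ ⊥ := by
      rcases eq_or_ne (fs y) ⊤ with hyt | hyn
      · rw [hyt, EReal.top_sub_coe, EReal.coe_mul_top_of_pos ht1'']; exact top_ne_bot
      · obtain ⟨s, hs⟩ := aux_ereal_exists_real (aux_fs_ge f 0 y) hyn
        rw [← hfs] at hs
        rw [hs, ← EReal.coe_sub, ← EReal.coe_mul]; exact EReal.coe_ne_bot _
    rw [EReal.top_add_of_ne_bot h2]
    exact le_top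
  by_cases hy : fs y = ⊤
  · have h1 : (((1 - t : ℝ)) : EReal) * (fs y - ((c * ‖y‖ ^ 2 : ℝ) : EReal)) = ⊤ := by
      rw [hy, EReal.top_sub_coe, EReal.coe_mul_top_of_pos ht1'']
    rw [h1]
    have h2 : ((t : ℝ) : EReal) * (fs x - ((c * ‖x‖ ^ 2 : ℝ) : EReal)) ≠ ⊥ := by
      obtain ⟨s, hs⟩ := aux_ereal_exists_real (aux_fs_ge f 0 x) hx
      rw [← hfs] at hs
      rw [hs, ← EReal.coe_sub, ← EReal.coe_mul]; exact EReal.coe_ne_bot _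
    rw [EReal.add_top_of_ne_bot h2]
    exact le_top
  -- finite case
  obtain ⟨a, ha⟩ := aux_ereal_exists_real (aux_fs_ge f 0 x) hx
  obtain ⟨b, hb⟩ := aux_ereal_exists_real (aux_fs_ge f 0 y) hy
  rw [← hfs] at ha hb
  beta_reduce
  set w := t • x + (1 - t) • y with hw
  have step1 : fs w ≤ ((t * a + (1 - t) * b - c * (t * (1 - t)) * ‖x - y‖ ^ 2 : ℝ) : EReal) := by
    refine iSup_le fun z => ?_
    rw [← EReal.coe_sub, EReal.coe_le_coe_iff]
    have rax : ⟪z, x⟫ - f z + c * ‖x - f' z‖ ^ 2 ≤ a := by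
      have := (aux_fs_lower hβ hdiff hlip z x).trans_eq ha
      rwa [EReal.coe_le_coe_iff] at this
    have rby : ⟪z, y⟫ - f z + c * ‖y - f' z‖ ^ 2 ≤ b := by
      have := (aux_fs_lower hβ hdiff hlip z y).trans_eq hb
      rwa [EReal.coe_le_coe_iff] at this
    have hzw : ⟪z, w⟫ = t * ⟪z, x⟫ + (1 - t) * ⟪z, y⟫ := by
      rw [hw, inner_add_right, real_inner_smul_right, real_inner_smul_right]
    have hcombo := aux_combo_norm_sq (x - f' z) (y - f' z) t
    have hAB : (x - f' z) - (y - f' z) = x - y := by abel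
    have hsub := norm_sub_sq_real (x - f' z) (y - f' z)
    rw [hAB] at hsub
    have hnn : (0:ℝ) ≤ ‖t • (x - f' z) + (1 - t) • (y - f' z)‖ ^ 2 := by positivity
    nlinarith [mul_le_mul_of_nonneg_left rax (le_of_lt ht0'),
      mul_le_mul_of_nonneg_left rby (le_of_lt ht1''), hc0, hnn, hcombo, hsub,
      mul_nonneg (mul_nonneg hc0 (le_of_lt ht0')) (le_of_lt ht1'')]
  have step2 := EReal.sub_le_sub step1 (le_refl ((c * ‖w‖ ^ 2 : ℝ) : EReal))
  refine step2.trans ?_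
  rw [ha, hb, ← EReal.coe_sub, ← EReal.coe_sub, ← EReal.coe_sub, ← EReal.coe_mul,
    ← EReal.coe_mul, ← EReal.coe_add, EReal.coe_le_coe_iff]
  have hcombo := aux_combo_norm_sq x y t
  have hsub := norm_sub_sq_real x y
  rw [← hw] at hcombo
  have keyid : t * (1 - t) * ‖x - y‖ ^ 2 + ‖w‖ ^ 2 = t * ‖x‖ ^ 2 + (1 - t) * ‖y‖ ^ 2 := by
    rw [hcombo, hsub]; ring
  have keyid2 : c * (t * (1 - t) * ‖x - y‖ ^ 2 + ‖w‖ ^ 2)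
      = c * (t * ‖x‖ ^ 2 + (1 - t) * ‖y‖ ^ 2) := by rw [keyid]
  linarith [keyid2]

/-- G2 : lower bound for the conjugate of h -/
lemma aux_eh_lower [CompleteSpace H] {f : H → ℝ} {f' : H → H} {β : ℝ} (hβ : 0 < β)
    (hconv : ConvexOn ℝ Set.univ f)
    (hdiff : ∀ x : H, HasGradientAt f (f' x) x) (x y : H) :
    ((f x - β / 2 * ‖x - y‖ ^ 2 : ℝ) : EReal) ≤
      econj (fun u : H =>
        econj (fun z : H => ((f z : ℝ) : EReal)) u - ((1 / (2 * β) * ‖u‖ ^ 2 : ℝ) : EReal)) y := by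
  have hterm := le_iSup (fun v : H => ((⟪v, y⟫ : ℝ) : EReal) -
      (econj (fun z : H => ((f z : ℝ) : EReal)) v - ((1 / (2 * β) * ‖v‖ ^ 2 : ℝ) : EReal)))
    (f' x)
  refine le_trans ?_ hterm
  rw [aux_fs_grad hconv hdiff x, ← EReal.coe_sub, ← EReal.coe_sub, EReal.coe_le_coe_iff]
  have e1 : ⟪f' x, y⟫ - ⟪x, f' x⟫ = ⟪f' x, y - x⟫ := by
    rw [inner_sub_right, real_inner_comm x (f' x)]
  have hx1 : ‖f' x + β • (y - x)‖ ^ 2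
      = ‖f' x‖ ^ 2 + 2 * (β * ⟪f' x, y - x⟫) + β ^ 2 * ‖y - x‖ ^ 2 := by
    rw [norm_add_sq_real, real_inner_smul_right, norm_smul, mul_pow]
    simp only [Real.norm_eq_abs, sq_abs]
    try ring
  have base : (0:ℝ) ≤ ‖f' x + β • (y - x)‖ ^ 2 := by positivity
  have base2 : (0:ℝ) ≤ 1 / (2 * β) *
      (‖f' x‖ ^ 2 + 2 * (β * ⟪f' x, y - x⟫) + β ^ 2 * ‖y - x‖ ^ 2) := by
    rw [← hx1]; positivity
  have expand : 1 / (2 * β) * (‖f' x‖ ^ 2 + 2 * (β * ⟪f' x, y - x⟫) + β ^ 2 * ‖y - x‖ ^ 2)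
      = 1 / (2 * β) * ‖f' x‖ ^ 2 + ⟪f' x, y - x⟫ + β / 2 * ‖y - x‖ ^ 2 := by
    field_simp
  rw [expand] at base2
  have hrev : ‖x - y‖ = ‖y - x‖ := norm_sub_rev x y
  rw [hrev]
  linarith [base2, e1.symm.le, e1.le]

/-- G1 : value of the conjugate of h at the prox point -/
lemma aux_eh_at_prox [CompleteSpace H] {f : H → ℝ} {f' : H → H} {β : ℝ} (hβ : 0 < β)
    (hconv : ConvexOn ℝ Set.univ f)
    (hdiff : ∀ x : H, HasGradientAt f (f' x) x)
    (hlip : ∀ x y : H, ‖f' x - f' y‖ ≤ β * ‖x - y‖) (x : H) :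
    econj (fun u : H =>
        econj (fun z : H => ((f z : ℝ) : EReal)) u - ((1 / (2 * β) * ‖u‖ ^ 2 : ℝ) : EReal))
      (x - β⁻¹ • f' x)
    = ((f x - 1 / (2 * β) * ‖f' x‖ ^ 2 : ℝ) : EReal) := by
  set p := x - β⁻¹ • f' x with hp
  refine le_antisymm (iSup_le fun v => ?_) ?_
  · beta_reduce
    rcases eq_or_ne (econj (fun z : H => ((f z : ℝ) : EReal)) v) ⊤ with hv | hv
    · rw [hv, EReal.top_sub_coe, EReal.sub_top]
      exact bot_le
    obtain ⟨r, hr⟩ := aux_ereal_exists_real (aux_fs_ge f 0 v) hv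
    rw [hr, ← EReal.coe_sub, ← EReal.coe_sub, EReal.coe_le_coe_iff]
    set u := x + β⁻¹ • (v - f' x) with hu
    have hrge : ⟪u, v⟫ - f u ≤ r := by
      have := (aux_fs_ge f u v).trans_eq hr
      rwa [EReal.coe_le_coe_iff] at this
    have hd := aux_descent hdiff hlip x u
    have eux : u - x = β⁻¹ • (v - f' x) := by rw [hu]; abel
    have e1 : ⟪u, v⟫ = ⟪v, x⟫ + β⁻¹ * (‖v‖ ^ 2 - ⟪v, f' x⟫) := by
      rw [hu, inner_add_left, real_inner_smul_left, inner_sub_left, real_inner_comm x v,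
        real_inner_self_eq_norm_sq, real_inner_comm (f' x) v]
    have e2 : ⟪f' x, u - x⟫ = β⁻¹ * (⟪v, f' x⟫ - ‖f' x‖ ^ 2) := by
      rw [eux, real_inner_smul_right, inner_sub_right, real_inner_comm (f' x) v,
        real_inner_self_eq_norm_sq]
    have e3 : ‖u - x‖ ^ 2 = β⁻¹ ^ 2 * (‖v‖ ^ 2 - 2 * ⟪v, f' x⟫ + ‖f' x‖ ^ 2) := by
      rw [eux, norm_smul, mul_pow]
      simp only [Real.norm_eq_abs, sq_abs]
      rw [norm_sub_sq_real]
    have e4 : ⟪v, p⟫ = ⟪v, x⟫ - β⁻¹ * ⟪v, f' x⟫ := by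
      rw [hp, inner_sub_right, real_inner_smul_right]
    have k2 : β / 2 * β⁻¹ ^ 2 = 1 / (2 * β) := by field_simp
    have k3 : β / 2 * (β⁻¹ ^ 2 * (‖v‖ ^ 2 - 2 * ⟪v, f' x⟫ + ‖f' x‖ ^ 2))
        = 1 / (2 * β) * (‖v‖ ^ 2 - 2 * ⟪v, f' x⟫ + ‖f' x‖ ^ 2) := by
      rw [← mul_assoc, k2]
    have k4 : β⁻¹ = 2 * (1 / (2 * β)) := by field_simp
    rw [e2, e3, k3] at hd
    rw [e1] at hrge
    rw [e4]
    have k4V : β⁻¹ * ‖v‖ ^ 2 = 2 * (1 / (2 * β)) * ‖v‖ ^ 2 := by rw [← k4]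
    have k4D : β⁻¹ * ⟪v, f' x⟫ = 2 * (1 / (2 * β)) * ⟪v, f' x⟫ := by rw [← k4]
    have k4C : β⁻¹ * ‖f' x‖ ^ 2 = 2 * (1 / (2 * β)) * ‖f' x‖ ^ 2 := by rw [← k4]
    nlinarith [hd, hrge, k4V, k4D, k4C]
  · have := aux_eh_lower hβ hconv hdiff x p
    have e5 : ‖x - p‖ ^ 2 = β⁻¹ ^ 2 * ‖f' x‖ ^ 2 := by
      have : x - p = β⁻¹ • f' x := by rw [hp]; abel
      rw [this, norm_smul, mul_pow]
      simp only [Real.norm_eq_abs, sq_abs]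
    have e6 : f x - β / 2 * ‖x - p‖ ^ 2 = f x - 1 / (2 * β) * ‖f' x‖ ^ 2 := by
      rw [e5, ← mul_assoc]
      have : β / 2 * β⁻¹ ^ 2 = 1 / (2 * β) := by field_simp
      rw [this]
    rwa [e6] at this

lemma aux_prox_one [CompleteSpace H] {f : H → ℝ} {f' : H → H} {β : ℝ} (hβ : 0 < β)
    (hconv : ConvexOn ℝ Set.univ f)
    (hdiff : ∀ x : H, HasGradientAt f (f' x) x)
    (hlip : ∀ x y : H, ‖f' x - f' y‖ ≤ β * ‖x - y‖) (x : H) :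
    IsProxPt (fun u : H => ((1 / β : ℝ) : EReal) *
        econj (fun u : H =>
          econj (fun z : H => ((f z : ℝ) : EReal)) u - ((1 / (2 * β) * ‖u‖ ^ 2 : ℝ) : EReal)) u)
      x (x - β⁻¹ • f' x) := by
  intro y
  beta_reduce
  rw [aux_eh_at_prox hβ hconv hdiff hlip x]
  have hlow := aux_eh_lower hβ hconv hdiff x y
  rcases eq_or_ne (econj (fun u : H =>
      econj (fun z : H => ((f z : ℝ) : EReal)) u - ((1 / (2 * β) * ‖u‖ ^ 2 : ℝ) : EReal)) y)
      ⊤ with hy | hy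
  · rw [hy, EReal.coe_mul_top_of_pos (by positivity : (0:ℝ) < 1 / β), EReal.top_add_coe]
    exact le_top
  obtain ⟨s, hs⟩ := aux_ereal_exists_real hlow hy
  rw [hs, ← EReal.coe_mul, ← EReal.coe_mul, ← EReal.coe_add, ← EReal.coe_add,
    EReal.coe_le_coe_iff]
  have hsge : f x - β / 2 * ‖x - y‖ ^ 2 ≤ s := by
    rw [hs] at hlow; rwa [EReal.coe_le_coe_iff] at hlow
  have e5 : ‖x - (x - β⁻¹ • f' x)‖ ^ 2 = β⁻¹ ^ 2 * ‖f' x‖ ^ 2 := by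
    have he : x - (x - β⁻¹ • f' x) = β⁻¹ • f' x := by abel
    rw [he, norm_smul, mul_pow]
    simp only [Real.norm_eq_abs, sq_abs]
  rw [e5]
  have sb := mul_le_mul_of_nonneg_left hsge (by positivity : (0:ℝ) ≤ 1 / β)
  have k5 : 1 / β * (1 / (2 * β) * ‖f' x‖ ^ 2) = 1 / 2 * (β⁻¹ ^ 2 * ‖f' x‖ ^ 2) := by
    field_simp
    try ring
    try simp
  have k6 : 1 / β * (β / 2 * ‖x - y‖ ^ 2) = 1 / 2 * ‖x - y‖ ^ 2 := by
    field_simp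
    try ring
    try simp
  nlinarith [sb, k5, k6]

lemma aux_prox_two [CompleteSpace H] {f : H → ℝ} {f' : H → H} {β : ℝ} (hβ : 0 < β)
    (hconv : ConvexOn ℝ Set.univ f)
    (hdiff : ∀ x : H, HasGradientAt f (f' x) x) (x : H) :
    IsProxPt (fun u : H => ((β : ℝ) : EReal) *
        (econj (fun z : H => ((f z : ℝ) : EReal)) u - ((1 / (2 * β) * ‖u‖ ^ 2 : ℝ) : EReal)))
      x (f' (β⁻¹ • x)) := by
  intro y
  beta_reduce
  set z := β⁻¹ • x with hz
  set g := f' z with hg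
  have hfsg : econj (fun z : H => ((f z : ℝ) : EReal)) g = ((⟪z, g⟫ - f z : ℝ) : EReal) :=
    aux_fs_grad hconv hdiff z
  rw [hfsg, ← EReal.coe_sub, ← EReal.coe_mul, ← EReal.coe_add]
  rcases eq_or_ne (econj (fun z : H => ((f z : ℝ) : EReal)) y) ⊤ with hy | hy
  · rw [hy, EReal.top_sub_coe, EReal.coe_mul_top_of_pos hβ, EReal.top_add_coe]
    exact le_top
  obtain ⟨r, hr⟩ := aux_ereal_exists_real (aux_fs_ge f 0 y) hy
  rw [hr, ← EReal.coe_sub, ← EReal.coe_mul, ← EReal.coe_add, EReal.coe_le_coe_iff]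
  have hrge : ⟪z, y⟫ - f z ≤ r := by
    have := (aux_fs_ge f z y).trans_eq hr
    rwa [EReal.coe_le_coe_iff] at this
  have hβ' : β ≠ 0 := ne_of_gt hβ
  have e1 : β * ⟪z, g⟫ = ⟪x, g⟫ := by
    rw [hz, real_inner_smul_left, ← mul_assoc, mul_inv_cancel₀ hβ', one_mul]
  have e2 : β * ⟪z, y⟫ = ⟪x, y⟫ := by
    rw [hz, real_inner_smul_left, ← mul_assoc, mul_inv_cancel₀ hβ', one_mul]
  have n1 : ‖x - g‖ ^ 2 = ‖x‖ ^ 2 - 2 * ⟪x, g⟫ + ‖g‖ ^ 2 := norm_sub_sq_real x g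
  have n2 : ‖x - y‖ ^ 2 = ‖x‖ ^ 2 - 2 * ⟪x, y⟫ + ‖y‖ ^ 2 := norm_sub_sq_real x y
  have k2g : β * (1 / (2 * β) * ‖g‖ ^ 2) = 1 / 2 * ‖g‖ ^ 2 := by field_simp
  have k2y : β * (1 / (2 * β) * ‖y‖ ^ 2) = 1 / 2 * ‖y‖ ^ 2 := by field_simp
  have hrb := mul_le_mul_of_nonneg_left hrge hβ.le
  nlinarith [e1, e2, n1, n2, k2g, k2y, hrb]

end Aux

theorem gradient_is_prox
    [CompleteSpace H]
    (f : H → ℝ) (f' : H → H) (β : ℝ) (hβ : 0 < β)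
    (hconv : ConvexOn ℝ Set.univ f)
    (hdiff : ∀ x : H, HasGradientAt f (f' x) x)
    (hlip : ∀ x y : H, ‖f' x - f' y‖ ≤ β * ‖x - y‖) :
    let h : H → EReal := fun u =>
      econj (fun x : H => ((f x : ℝ) : EReal)) u - ((1 / (2 * β) * ‖u‖ ^ 2 : ℝ) : EReal)
    EProper h ∧ LowerSemicontinuous h ∧ EConvexOn h ∧
      (∃ p : H → H,
        (∀ x : H, IsProxPt (fun u => ((1 / β : ℝ) : EReal) * econj h u) x (p x)) ∧
        ∀ x : H, f' x = β • (x - p x)) ∧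
      (∃ P : H → H,
        (∀ x : H, IsProxPt (fun u => ((β : ℝ) : EReal) * h u) x (P x)) ∧
        ∀ x : H, f' x = P (β • x)) := by
  intro h
  have hβ' : β ≠ 0 := ne_of_gt hβ
  refine ⟨aux_h_proper hconv hdiff, aux_h_lsc f β, aux_h_econvex hβ hdiff hlip, ?_, ?_⟩
  · refine ⟨fun x => x - β⁻¹ • f' x, fun x => aux_prox_one hβ hconv hdiff hlip x, fun x => ?_⟩
    have e : x - (x - β⁻¹ • f' x) = β⁻¹ • f' x := by abel
    rw [e, smul_smul, mul_inv_cancel₀ hβ', one_smul]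
  · refine ⟨fun y => f' (β⁻¹ • y), fun x => aux_prox_two hβ hconv hdiff x, fun x => ?_⟩
    show f' x = f' (β⁻¹ • β • x)
    rw [smul_smul, inv_mul_cancel₀ hβ', one_smul]
end

section
/- Conversely, if f : H → ℝ is convex Fréchet differentiable and f(x) - f(y) - ⟨x - y, ∇f(y)⟩ ≤ (β/2)‖x - y‖² for all x, y ∈ H, then ∇f is β-Lipschitz continuous. -/
open RealInnerProductSpace

/-- First-order condition for convex differentiable functions:
`⟪z - y, ∇f y⟫ ≤ f z - f y`. -/
lemma grad_ineq_of_convex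
    {H : Type*} [NormedAddCommGroup H] [InnerProductSpace ℝ H] [CompleteSpace H]
    (f : H → ℝ) (f' : H → H)
    (hconv : ConvexOn ℝ Set.univ f)
    (hdiff : ∀ x : H, HasGradientAt f (f' x) x)
    (y z : H) : ⟪z - y, f' y⟫ ≤ f z - f y := by
  set c : ℝ → H := fun t => y + t • (z - y) with hc_def
  have hc : ∀ t : ℝ, HasDerivAt c (z - y) t := by
    intro t
    have := ((hasDerivAt_id' t).smul_const (z - y)).const_add y
    rw [one_smul] at this
    exact this
  have hg : ∀ t : ℝ, HasDerivAt (f ∘ c) ⟪f' (c t), z - y⟫ t := by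
    intro t
    have h1 := (hdiff (c t)).hasFDerivAt.comp_hasDerivAt t (hc t)
    simpa using h1
  have hconv2 : ConvexOn ℝ Set.univ (f ∘ c) := by
    have := hconv.comp_affineMap (AffineMap.lineMap y z)
    have heq : (f ∘ (AffineMap.lineMap y z : ℝ →ᵃ[ℝ] H)) = f ∘ c := by
      funext t
      simp [hc_def, AffineMap.lineMap_apply, Function.comp]
      congr 1
      abel
    rw [heq] at this
    simpa using this
  have hslope := hconv2.le_slope_of_hasDerivWithinAt (Set.mem_univ (0:ℝ))
    (Set.mem_univ (1:ℝ)) one_pos ((hg 0).hasDerivWithinAt)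
  have hc0 : c 0 = y := by simp [hc_def]
  have hc1 : c 1 = z := by simp [hc_def]
  rw [slope_def_field] at hslope
  simp only [Function.comp, hc0, hc1] at hslope
  have : ⟪f' y, z - y⟫ ≤ (f z - f y) / (1 - 0) := by
    simpa [hc0] using hslope
  rw [real_inner_comm]
  simpa using this

theorem bregman_bound_implies_lipschitz_gradient
    {H : Type*} [NormedAddCommGroup H] [InnerProductSpace ℝ H] [CompleteSpace H]
    (f : H → ℝ) (f' : H → H) (β : ℝ) (hβ : 0 < β)
    (hconv : ConvexOn ℝ Set.univ f)
    (hdiff : ∀ x : H, HasGradientAt f (f' x) x)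
    (hbreg : ∀ x y : H, f x - f y - ⟪x - y, f' y⟫ ≤ β / 2 * ‖x - y‖ ^ 2) :
    ∀ x y : H, ‖f' x - f' y‖ ≤ β * ‖x - y‖ := by
  have key : ∀ x y : H, 1 / (2 * β) * ‖f' x - f' y‖ ^ 2 ≤
      f x - f y - ⟪x - y, f' y⟫ := by
    intro x y
    set d := f' x - f' y with hd
    set z := x - β⁻¹ • d with hz
    have h1 : f z - f x - ⟪z - x, f' x⟫ ≤ β / 2 * ‖z - x‖ ^ 2 := hbreg z x
    have h2 : ⟪z - y, f' y⟫ ≤ f z - f y := grad_ineq_of_convex f f' hconv hdiff y z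
    have hzx : z - x = -(β⁻¹ • d) := by rw [hz]; abel
    have hnorm : ‖z - x‖ ^ 2 = β⁻¹ ^ 2 * ‖d‖ ^ 2 := by
      rw [hzx, norm_neg, norm_smul]
      simp [mul_pow, abs_of_pos (inv_pos.mpr hβ)]
    have hin1 : ⟪z - x, f' x⟫ = -(β⁻¹ * ⟪d, f' x⟫) := by
      rw [hzx, inner_neg_left, real_inner_smul_left]
    have hzy : z - y = (x - y) - β⁻¹ • d := by rw [hz]; abel
    have hin2 : ⟪z - y, f' y⟫ = ⟪x - y, f' y⟫ - β⁻¹ * ⟪d, f' y⟫ := by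
      rw [hzy, inner_sub_left, real_inner_smul_left]
    have hdd : ⟪d, f' x⟫ - ⟪d, f' y⟫ = ‖d‖ ^ 2 := by
      rw [← inner_sub_right, ← hd, real_inner_self_eq_norm_sq]
    rw [hnorm, hin1] at h1
    rw [hin2] at h2
    have hsimp : β / 2 * (β⁻¹ ^ 2 * ‖d‖ ^ 2) = 1 / (2 * β) * ‖d‖ ^ 2 := by
      field_simp
    rw [hsimp] at h1
    have hdd' : β⁻¹ * ⟪d, f' x⟫ - β⁻¹ * ⟪d, f' y⟫ = β⁻¹ * ‖d‖ ^ 2 := by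
      rw [← mul_sub, hdd]
    have h3 : β⁻¹ * ‖d‖ ^ 2 - 1 / (2 * β) * ‖d‖ ^ 2 = 1 / (2 * β) * ‖d‖ ^ 2 := by
      field_simp
      ring
    linarith [h1, h2, hdd', h3]
  intro x y
  set d := f' x - f' y with hd
  have k1 := key x y
  have k2 := key y x
  have hdsym : ‖f' y - f' x‖ = ‖d‖ := by rw [hd, norm_sub_rev]
  have hcs : ⟪x - y, d⟫ ≤ ‖x - y‖ * ‖d‖ := real_inner_le_norm _ _
  have hsum : 1 / β * ‖d‖ ^ 2 ≤ ⟪x - y, d⟫ := by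
    have hinner : (f x - f y - ⟪x - y, f' y⟫) + (f y - f x - ⟪y - x, f' x⟫)
        = ⟪x - y, d⟫ := by
      have h1 : ⟪y - x, f' x⟫ = -⟪x - y, f' x⟫ := by
        rw [show y - x = -(x - y) by abel, inner_neg_left]
      rw [h1, hd, inner_sub_right]
      ring
    rw [hdsym] at k2
    have h4 : 1 / β * ‖d‖ ^ 2 = 1 / (2 * β) * ‖d‖ ^ 2 + 1 / (2 * β) * ‖d‖ ^ 2 := by
      field_simp
      ring
    linarith [k1, k2, hinner]
  rcases eq_or_ne ‖d‖ 0 with h0 | h0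
  · rw [h0]
    positivity
  · have hdpos : 0 < ‖d‖ := lt_of_le_of_ne (norm_nonneg _) (Ne.symm h0)
    have : ‖d‖ ^ 2 ≤ β * (‖x - y‖ * ‖d‖) := by
      have := hsum.trans hcs
      calc ‖d‖ ^ 2 = β * (1 / β * ‖d‖ ^ 2) := by field_simp
        _ ≤ β * (‖x - y‖ * ‖d‖) := by
            exact mul_le_mul_of_nonneg_left this hβ.le
    nlinarith [hdpos]
end

section
/- Let f : H → ℝ be convex Fréchet differentiable with ∇f β-Lipschitz, and suppose f* is Gâteaux differentiable on the nonempty interior of its domain. Then for all x*, y* ∈ H, β·D_{f*}(x*, y*) ≥ ½‖x* - y*‖², where D_{f*}(x*,y*) = f*(x*) - f*(y*) - ⟨x* - y*, ∇f*(y*)⟩ when y* ∈ int dom f*, and +∞ otherwise. -/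
open RealInnerProductSpace Classical

variable {H : Type*} [NormedAddCommGroup H] [InnerProductSpace ℝ H]

section Aux

variable [CompleteSpace H]

private lemma lineDeriv_aux (f : H → ℝ) (f' : H → H)
    (hdiff : ∀ x : H, HasGradientAt f (f' x) x) (x d : H) (t : ℝ) :
    HasDerivAt (fun s : ℝ => f (x + s • d)) ⟪f' (x + t • d), d⟫ t := by
  have h1 : HasDerivAt (fun s : ℝ => x + s • d) d t := by
    simpa using ((hasDerivAt_id t).smul_const d).const_add x
  have h2 := (hdiff (x + t • d)).hasFDerivAt
  have h3 := h2.comp_hasDerivAt t h1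
  simpa [InnerProductSpace.toDual_apply_apply, Function.comp_def] using h3

private lemma descent_aux (f : H → ℝ) (f' : H → H) (β : ℝ) (hβ : 0 < β)
    (hdiff : ∀ x : H, HasGradientAt f (f' x) x)
    (hlip : ∀ x y : H, ‖f' x - f' y‖ ≤ β * ‖x - y‖) (x d : H) :
    f (x + d) ≤ f x + ⟪f' x, d⟫ + β / 2 * ‖d‖ ^ 2 := by
  set ψ : ℝ → ℝ := fun t => β * ‖d‖ ^ 2 * t ^ 2 / 2 + t * ⟪f' x, d⟫ + f x - f (x + t • d)
    with hψ
  have hd : ∀ t : ℝ, HasDerivAt ψ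
      (β * ‖d‖ ^ 2 * t + ⟪f' x, d⟫ - ⟪f' (x + t • d), d⟫) t := by
    intro t
    have h1 : HasDerivAt (fun t : ℝ => β * ‖d‖ ^ 2 * t ^ 2 / 2 + t * ⟪f' x, d⟫ + f x)
        (β * ‖d‖ ^ 2 * t + ⟪f' x, d⟫) t := by
      have h := ((((hasDerivAt_pow 2 t).const_mul (β * ‖d‖ ^ 2)).div_const 2).add
        ((hasDerivAt_id t).mul_const (⟪f' x, d⟫ : ℝ))).add_const (f x)
      refine h.congr_deriv ?_
      ring
    exact h1.sub (lineDeriv_aux f f' hdiff x d t)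
  have hmono : MonotoneOn ψ (Set.Icc 0 1) := by
    apply monotoneOn_of_deriv_nonneg (convex_Icc 0 1)
    · exact (fun t _ => ((hd t).continuousAt).continuousWithinAt)
    · intro t ht
      exact ((hd t).differentiableAt).differentiableWithinAt
    · intro t ht
      rw [interior_Icc] at ht
      rw [(hd t).deriv]
      have hl := hlip (x + t • d) x
      have hn : ‖x + t • d - x‖ = t * ‖d‖ := by
        rw [add_sub_cancel_left, norm_smul, Real.norm_eq_abs, abs_of_pos ht.1]
      rw [hn] at hl
      have hi : |⟪f' (x + t • d) - f' x, d⟫| ≤ ‖f' (x + t • d) - f' x‖ * ‖d‖ :=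
        abs_real_inner_le_norm _ _
      have hi2 : ⟪f' (x + t • d) - f' x, d⟫ = ⟪f' (x + t • d), d⟫ - ⟪f' x, d⟫ :=
        inner_sub_left _ _ _
      have habs := abs_le.1 hi
      nlinarith [norm_nonneg d, ht.1.le, habs.2]
  have h01 := hmono (Set.mem_Icc.2 ⟨le_refl 0, zero_le_one⟩)
    (Set.mem_Icc.2 ⟨zero_le_one, le_refl 1⟩) zero_le_one
  have hψ0 : ψ 0 = 0 := by simp [hψ]
  have hψ1 : ψ 1 = β * ‖d‖ ^ 2 / 2 + ⟪f' x, d⟫ + f x - f (x + d) := by simp [hψ]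
  rw [hψ0, hψ1] at h01
  linarith

private lemma star_aux (f : H → ℝ) (f' : H → H) (β : ℝ) (hβ : 0 < β)
    (hdiff : ∀ x : H, HasGradientAt f (f' x) x)
    (hlip : ∀ x y : H, ‖f' x - f' y‖ ≤ β * ‖x - y‖) (x u : H) (B : ℝ)
    (hB : ∀ z : H, ⟪z, u⟫ - f z ≤ B) :
    ⟪x, u⟫ - f x + 1 / (2 * β) * ‖u - f' x‖ ^ 2 ≤ B := by
  set z := x + β⁻¹ • (u - f' x) with hz
  have h1 := hB z
  have h2 := descent_aux f f' β hβ hdiff hlip x (β⁻¹ • (u - f' x))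
  have e1 : (⟪z, u⟫ : ℝ) = ⟪x, u⟫ + β⁻¹ * ⟪u - f' x, u⟫ := by
    rw [hz, inner_add_left, real_inner_smul_left]
  have e2 : (⟪f' x, β⁻¹ • (u - f' x)⟫ : ℝ) = β⁻¹ * ⟪f' x, u - f' x⟫ :=
    real_inner_smul_right _ _ _
  have e3 : ‖β⁻¹ • (u - f' x)‖ ^ 2 = β⁻¹ ^ 2 * ‖u - f' x‖ ^ 2 := by
    rw [norm_smul, Real.norm_eq_abs, abs_of_pos (inv_pos.2 hβ)]
    ring
  have e4 : (⟪f' x, u - f' x⟫ : ℝ) = ⟪u - f' x, u⟫ - ‖u - f' x‖ ^ 2 := by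
    have := real_inner_self_eq_norm_sq (u - f' x)
    have h5 : (⟪u - f' x, u - f' x⟫ : ℝ) = ⟪u - f' x, u⟫ - ⟪u - f' x, f' x⟫ :=
      inner_sub_right _ _ _
    have h6 : (⟪f' x, u - f' x⟫ : ℝ) = ⟪u - f' x, f' x⟫ := real_inner_comm _ _
    linarith
  rw [e2, e3, e4] at h2
  rw [e1] at h1
  have hβ' : β⁻¹ = 1 / β := inv_eq_one_div β
  have key : ⟪x, u⟫ - f x + 1 / (2 * β) * ‖u - f' x‖ ^ 2
      ≤ ⟪x, u⟫ + β⁻¹ * ⟪u - f' x, u⟫ - f z := by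
    have hfz : f z ≤ f x + β⁻¹ * (⟪u - f' x, u⟫ - ‖u - f' x‖ ^ 2)
        + β / 2 * (β⁻¹ ^ 2 * ‖u - f' x‖ ^ 2) := h2
    have harith : β⁻¹ * ‖u - f' x‖ ^ 2 - β / 2 * (β⁻¹ ^ 2 * ‖u - f' x‖ ^ 2)
        = 1 / (2 * β) * ‖u - f' x‖ ^ 2 := by
      field_simp
      ring
    linarith
  linarith

private lemma quad_aux (a b : H) (t : ℝ) :
    t * (1 - t) * ‖a - b‖ ^ 2 ≤ (1 - t) * ‖a‖ ^ 2 + t * ‖b‖ ^ 2 := by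
  have h0 : (0 : ℝ) ≤ ‖(1 - t) • a + t • b‖ ^ 2 := sq_nonneg _
  have e : ‖(1 - t) • a + t • b‖ ^ 2
      = (1 - t) ^ 2 * ‖a‖ ^ 2 + 2 * ((1 - t) * (t * ⟪a, b⟫)) + t ^ 2 * ‖b‖ ^ 2 := by
    rw [norm_add_sq_real, norm_smul, norm_smul, real_inner_smul_left, real_inner_smul_right,
      Real.norm_eq_abs, Real.norm_eq_abs, mul_pow, mul_pow, sq_abs, sq_abs]
  have e2 : ‖a - b‖ ^ 2 = ‖a‖ ^ 2 - 2 * ⟪a, b⟫ + ‖b‖ ^ 2 := norm_sub_sq_real a b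
  rw [e] at h0
  rw [e2]
  nlinarith [h0]

end Aux

theorem bregman_distance_conjugate_lower_bound
    [CompleteSpace H]
    (f : H → ℝ) (f' : H → H) (β : ℝ) (hβ : 0 < β)
    (hconv : ConvexOn ℝ Set.univ f)
    (hdiff : ∀ x : H, HasGradientAt f (f' x) x)
    (hlip : ∀ x y : H, ‖f' x - f' y‖ ≤ β * ‖x - y‖)
    -- `S` is the interior of the domain of `f*`, assumed nonempty
    (S : Set H)
    (hS : S = interior {u : H | econj (fun x : H => ((f x : ℝ) : EReal)) u ≠ ⊤})
    (hSne : S.Nonempty)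
    -- `f*` is Gâteaux differentiable on `S`, with gradient `g` and real values `F` on `S`
    (F : H → ℝ) (g : H → H)
    (hF : ∀ u ∈ S, ((F u : ℝ) : EReal) = econj (fun x : H => ((f x : ℝ) : EReal)) u)
    (hg : ∀ y ∈ S, ∀ v : H, HasLineDerivAt ℝ F (⟪v, g y⟫ : ℝ) y v) :
    ∀ xs ys : H,
      ((β : ℝ) : EReal) *
          (if ys ∈ S then
            econj (fun x : H => ((f x : ℝ) : EReal)) xs
              - econj (fun x : H => ((f x : ℝ) : EReal)) ys
              - ((⟪xs - ys, g ys⟫ : ℝ) : EReal)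
          else (⊤ : EReal))
        ≥ ((1 / 2 * ‖xs - ys‖ ^ 2 : ℝ) : EReal) := by
  have hβE : (0 : EReal) < ((β : ℝ) : EReal) := by exact_mod_cast hβ
  set c : H → EReal := econj (fun x : H => ((f x : ℝ) : EReal)) with hc
  have term_le : ∀ x u : H, ((⟪x, u⟫ - f x : ℝ) : EReal) ≤ c u := by
    intro x u
    rw [hc, econj, EReal.coe_sub]
    exact le_iSup (fun x : H => ((⟪x, u⟫ : ℝ) : EReal) - ((f x : ℝ) : EReal)) x
  have sup_le : ∀ (u : H) (B : ℝ), (∀ x : H, ⟪x, u⟫ - f x ≤ B) → c u ≤ (B : EReal) := by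
    intro u B hB
    rw [hc, econj]
    refine iSup_le fun x => ?_
    rw [← EReal.coe_sub]
    exact_mod_cast hB x
  intro xs ys
  by_cases hys : ys ∈ S
  swap
  · simp only [if_neg hys]
    rw [EReal.mul_top_of_pos hβE]
    exact le_top
  simp only [if_pos hys]
  have hcys : c ys = ((F ys : ℝ) : EReal) := (hF ys hys).symm
  by_cases htop : c xs = ⊤
  · rw [htop, hcys, EReal.top_sub_coe, EReal.top_sub_coe, EReal.mul_top_of_pos hβE]
    exact le_top
  have hbot : c xs ≠ ⊥ := by
    intro h
    have h2 := term_le 0 xs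
    rw [h] at h2
    exact (EReal.bot_lt_coe _).not_ge h2
  set A : ℝ := (c xs).toReal with hAdef
  have hA : c xs = ((A : ℝ) : EReal) := (EReal.coe_toReal htop hbot).symm
  -- the main real inequality
  set v : H := xs - ys with hv
  have key : 1 / (2 * β) * ‖v‖ ^ 2 ≤ A - F ys - ⟪v, g ys⟫ := by
    have hopen : IsOpen S := hS ▸ isOpen_interior
    obtain ⟨r, hr, hball⟩ := Metric.isOpen_iff.1 hopen ys hys
    set t₀ : ℝ := min (r / (‖v‖ + 1)) 1 with ht₀def
    have ht₀ : 0 < t₀ := lt_min (div_pos hr (by positivity)) one_pos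
    have ht₀1 : t₀ ≤ 1 := min_le_right _ _
    have hmem : ∀ t : ℝ, 0 < t → t < t₀ → ys + t • v ∈ S := by
      intro t ht1 ht2
      apply hball
      rw [Metric.mem_ball, dist_eq_norm, add_sub_cancel_left, norm_smul, Real.norm_eq_abs,
        abs_of_pos ht1]
      have h3 : t < r / (‖v‖ + 1) := lt_of_lt_of_le ht2 (min_le_left _ _)
      have h4 : t * (‖v‖ + 1) < r := by
        rw [← lt_div_iff₀ (by positivity)]
        exact h3
      nlinarith [norm_nonneg v]
    have hFbound : ∀ x : H, ⟪x, ys⟫ - f x + 1 / (2 * β) * ‖ys - f' x‖ ^ 2 ≤ F ys := by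
      intro x
      refine star_aux f f' β hβ hdiff hlip x ys (F ys) fun z => ?_
      have := (term_le z ys).trans_eq hcys
      exact_mod_cast this
    have hAbound : ∀ x : H, ⟪x, xs⟫ - f x + 1 / (2 * β) * ‖xs - f' x‖ ^ 2 ≤ A := by
      intro x
      refine star_aux f f' β hβ hdiff hlip x xs A fun z => ?_
      have := (term_le z xs).trans_eq hA
      exact_mod_cast this
    have hslope : ∀ t : ℝ, 0 < t → t < t₀ →
        (F (ys + t • v) - F ys) / t ≤ A - F ys - 1 / (2 * β) * (1 - t) * ‖v‖ ^ 2 := by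
      intro t ht1 ht2
      have hw : ys + t • v ∈ S := hmem t ht1 ht2
      have hcw : c (ys + t • v) = ((F (ys + t • v) : ℝ) : EReal) := (hF _ hw).symm
      have ht3 : t ≤ 1 := le_of_lt (lt_of_lt_of_le ht2 ht₀1)
      have hub : ∀ x : H, ⟪x, ys + t • v⟫ - f x
          ≤ (1 - t) * F ys + t * A - 1 / (2 * β) * (t * (1 - t)) * ‖v‖ ^ 2 := by
        intro x
        have e : (⟪x, ys + t • v⟫ : ℝ) = (1 - t) * ⟪x, ys⟫ + t * ⟪x, xs⟫ := by
          rw [inner_add_right, real_inner_smul_right, hv, inner_sub_right]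
          ring
        have q := quad_aux (ys - f' x) (xs - f' x) t
        have e2 : (ys - f' x) - (xs - f' x) = ys - xs := by abel
        rw [e2] at q
        have hnorm : ‖ys - xs‖ = ‖v‖ := by rw [hv, norm_sub_rev]
        rw [hnorm] at q
        have h1 := hFbound x
        have h2 := hAbound x
        have hq := mul_le_mul_of_nonneg_left q
          (show (0 : ℝ) ≤ 1 / (2 * β) by positivity)
        have hh1 := mul_le_mul_of_nonneg_left h1 (sub_nonneg.2 ht3)
        have hh2 := mul_le_mul_of_nonneg_left h2 ht1.le
        rw [e]
        nlinarith [hq, hh1, hh2]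
      have hle : F (ys + t • v) ≤ (1 - t) * F ys + t * A
          - 1 / (2 * β) * (t * (1 - t)) * ‖v‖ ^ 2 := by
        have := sup_le _ _ hub
        rw [hcw] at this
        exact_mod_cast this
      rw [div_le_iff₀ ht1]
      nlinarith [hle]
    have hd : HasDerivAt (fun t : ℝ => F (ys + t • v)) ⟪v, g ys⟫ 0 := hg ys hys v
    have hslim : Filter.Tendsto (fun t : ℝ => (F (ys + t • v) - F ys) / t)
        (nhdsWithin 0 (Set.Ioi 0)) (nhds ⟪v, g ys⟫) := by
      have h1 := hasDerivAt_iff_tendsto_slope.1 hd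
      have h2 : nhdsWithin (0 : ℝ) (Set.Ioi 0) ≤ nhdsWithin 0 {(0 : ℝ)}ᶜ :=
        nhdsWithin_mono 0 (fun t ht => ne_of_gt ht)
      have h3 := h1.mono_left h2
      refine h3.congr fun t => ?_
      rw [slope_def_field]
      simp
    have hrlim : Filter.Tendsto
        (fun t : ℝ => A - F ys - 1 / (2 * β) * (1 - t) * ‖v‖ ^ 2)
        (nhdsWithin 0 (Set.Ioi 0)) (nhds (A - F ys - 1 / (2 * β) * ‖v‖ ^ 2)) := by
      have hcont : Continuous (fun t : ℝ => A - F ys - 1 / (2 * β) * (1 - t) * ‖v‖ ^ 2) := by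
        fun_prop
      have := (hcont.tendsto 0).mono_left (nhdsWithin_le_nhds (s := Set.Ioi (0:ℝ)))
      simpa using this
    have hev : ∀ᶠ t in nhdsWithin (0 : ℝ) (Set.Ioi 0),
        (F (ys + t • v) - F ys) / t ≤ A - F ys - 1 / (2 * β) * (1 - t) * ‖v‖ ^ 2 := by
      filter_upwards [Ioo_mem_nhdsGT_of_mem (Set.mem_Ico.2 ⟨le_refl 0, ht₀⟩)] with t ht
      exact hslope t ht.1 ht.2
    have hfinal := le_of_tendsto_of_tendsto hslim hrlim hev
    linarith
  rw [ge_iff_le, hA, hcys, ← EReal.coe_sub, ← EReal.coe_sub, ← EReal.coe_mul,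
    EReal.coe_le_coe_iff]
  have hmul : β * (1 / (2 * β) * ‖v‖ ^ 2) = 1 / 2 * ‖v‖ ^ 2 := by
    field_simp
  nlinarith [mul_le_mul_of_nonneg_left key hβ.le]
end

section
/- Let G : H → H be continuously Fréchet differentiable with each derivative DG(x) self-adjoint and positive semidefinite (i.e., G is the gradient of a C² convex function). Then G is nonexpansive if and only if 2G - Id is nonexpansive (equivalently, G is firmly nonexpansive). -/
open RealInnerProductSpace

private lemma quad_nonneg {a b c : ℝ} (ha : 0 ≤ a)
    (h : ∀ t : ℝ, 0 ≤ a * t ^ 2 + b * t + c) : b ^ 2 ≤ 4 * a * c := by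
  rcases eq_or_lt_of_le ha with ha0 | ha0
  · have hb : b = 0 := by
      by_contra hb
      have := h (-(c + 1) / b)
      rw [← ha0] at this
      field_simp at this
      rw [le_div_iff₀ (lt_of_le_of_ne (sq_nonneg b) (Ne.symm (pow_ne_zero 2 hb)))] at this
      rcases lt_or_gt_of_ne hb with h' | h' <;> nlinarith
    have hc := h 0
    simp at hc
    nlinarith
  · have := discrim_le_zero (a := a) (b := b) (c := c) (fun t => by nlinarith [h t])
    rw [discrim] at this
    nlinarith

private lemma aux_cs {H : Type*} [NormedAddCommGroup H] [InnerProductSpace ℝ H]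
    (A : H →L[ℝ] H) (hsa : ∀ u v : H, ⟪A u, v⟫ = ⟪u, A v⟫)
    (hpos : ∀ v : H, 0 ≤ ⟪v, A v⟫) (u v : H) :
    ⟪u, A v⟫ ^ 2 ≤ ⟪u, A u⟫ * ⟪v, A v⟫ := by
  have key : ∀ t : ℝ, 0 ≤ ⟪v, A v⟫ * t ^ 2 + (2 * ⟪u, A v⟫) * t + ⟪u, A u⟫ := by
    intro t
    have h := hpos (u + t • v)
    have hAv : ⟪v, A u⟫ = ⟪u, A v⟫ := by rw [← hsa v u, real_inner_comm]
    simp only [map_add, map_smul, inner_add_left, inner_add_right,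
      real_inner_smul_left, real_inner_smul_right] at h
    rw [hAv] at h
    nlinarith [h]
  have := quad_nonneg (hpos v) key
  nlinarith

private lemma aux_sq {H : Type*} [NormedAddCommGroup H] [InnerProductSpace ℝ H]
    (A : H →L[ℝ] H) (hsa : ∀ u v : H, ⟪A u, v⟫ = ⟪u, A v⟫)
    (hpos : ∀ v : H, 0 ≤ ⟪v, A v⟫) (hA : ‖A‖ ≤ 1) (v : H) :
    ‖A v‖ ^ 2 ≤ ⟪v, A v⟫ := by
  rcases eq_or_ne (A v) 0 with h | h
  · simpa [h] using hpos v
  · have h1 := aux_cs A hsa hpos (A v) v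
    have h2 : ⟪A v, A (A v)⟫ ≤ ‖A v‖ * ‖A (A v)‖ := real_inner_le_norm _ _
    have h3 : ‖A (A v)‖ ≤ 1 * ‖A v‖ := le_trans (A.le_opNorm (A v))
      (mul_le_mul_of_nonneg_right hA (norm_nonneg _))
    have h4 : ⟪A v, A v⟫ = ‖A v‖ ^ 2 := real_inner_self_eq_norm_sq (A v)
    have h5 : 0 < ‖A v‖ := norm_pos_iff.mpr h
    rw [h4] at h1
    have hp : ⟪A v, A (A v)⟫ ≤ ‖A v‖ ^ 2 := by nlinarith [norm_nonneg (A v)]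
    have h6 : (‖A v‖ ^ 2) ^ 2 ≤ ‖A v‖ ^ 2 * ⟪v, A v⟫ :=
      h1.trans (mul_le_mul_of_nonneg_right hp (hpos v))
    nlinarith [h6, mul_pos h5 h5]

theorem monotone_gradient_nonexpansive_iff_firmly
    {H : Type*} [NormedAddCommGroup H] [InnerProductSpace ℝ H]
    (G : H → H) (G' : H → H →L[ℝ] H)
    (hdiff : ∀ x : H, HasFDerivAt G (G' x) x)
    (hcont : Continuous G')
    (hsa : ∀ x : H, ∀ u v : H, ⟪G' x u, v⟫ = ⟪u, G' x v⟫)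
    (hpos : ∀ x y : H, 0 ≤ ⟪y, G' x y⟫) :
    ((∀ x y : H, ‖G x - G y‖ ≤ ‖x - y‖) ↔
      (∀ x y : H, ‖(2 • G x - x) - (2 • G y - y)‖ ≤ ‖x - y‖)) ∧
    ((∀ x y : H, ‖G x - G y‖ ≤ ‖x - y‖) ↔
      (∀ x y : H, ⟪x - y, G x - G y⟫ ≥ ‖G x - G y‖ ^ 2)) := by
  -- key expansion: ‖2u - w‖² = 4‖u‖² - 4⟪w,u⟫ + ‖w‖²
  have expand : ∀ u w : H, ‖(2:ℕ) • u - w‖ ^ 2 = 4 * ‖u‖ ^ 2 - 4 * ⟪w, u⟫ + ‖w‖ ^ 2 := by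
    intro u w
    have := norm_sub_sq_real ((2:ℕ) • u) w
    have h2 : ((2:ℕ) • u : H) = u + u := two_smul ℕ u ▸ rfl
    rw [h2] at this ⊢
    rw [this, norm_add_sq_real, inner_add_left]
    rw [real_inner_comm w u, real_inner_self_eq_norm_sq]
    ring
  have rearr : ∀ x y : H, (2 • G x - x) - (2 • G y - y) = 2 • (G x - G y) - (x - y) := by
    intro x y; rw [smul_sub]; abel
  -- firmly ⇒ nonexpansive
  have firm_to_ne : (∀ x y : H, ⟪x - y, G x - G y⟫ ≥ ‖G x - G y‖ ^ 2) →
      (∀ x y : H, ‖G x - G y‖ ≤ ‖x - y‖) := by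
    intro hf x y
    have h1 := hf x y
    have h2 := real_inner_le_norm (x - y) (G x - G y)
    rcases eq_or_lt_of_le (norm_nonneg (G x - G y)) with h | h
    · rw [← h]; exact norm_nonneg _
    · nlinarith
  -- 2G-Id nonexpansive ⇔ firmly
  have refl_iff_firm : (∀ x y : H, ‖(2 • G x - x) - (2 • G y - y)‖ ≤ ‖x - y‖) ↔
      (∀ x y : H, ⟪x - y, G x - G y⟫ ≥ ‖G x - G y‖ ^ 2) := by
    constructor
    · intro hr x y
      have h := hr x y
      rw [rearr x y] at h
      have hsq : ‖2 • (G x - G y) - (x - y)‖ ^ 2 ≤ ‖x - y‖ ^ 2 :=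
        pow_le_pow_left₀ (norm_nonneg _) h 2
      rw [expand] at hsq
      nlinarith
    · intro hf x y
      have h := hf x y
      rw [rearr x y]
      have key : ‖2 • (G x - G y) - (x - y)‖ ^ 2 ≤ ‖x - y‖ ^ 2 := by
        rw [expand]; nlinarith
      exact (pow_le_pow_iff_left₀ (norm_nonneg _) (norm_nonneg _) two_ne_zero).mp key
  -- nonexpansive ⇒ 2G-Id nonexpansive (the hard direction)
  have ne_to_refl : (∀ x y : H, ‖G x - G y‖ ≤ ‖x - y‖) →
      (∀ x y : H, ‖(2 • G x - x) - (2 • G y - y)‖ ≤ ‖x - y‖) := by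
    intro hne x y
    have hlip : LipschitzWith 1 G := LipschitzWith.of_dist_le_mul (fun a b => by
      simpa [dist_eq_norm, one_mul] using hne a b)
    set F : H → H := fun z => 2 • G z - z with hF
    set F' : H → H →L[ℝ] H := fun z => (2:ℕ) • G' z - ContinuousLinearMap.id ℝ H with hF'
    have hFd : ∀ z : H, HasFDerivAt F (F' z) z := by
      intro z
      exact ((hdiff z).const_smul (2:ℕ)).sub (hasFDerivAt_id z)
    have hbound : ∀ z : H, ‖F' z‖ ≤ 1 := by
      intro z
      have hAle : ‖G' z‖ ≤ 1 := by
        simpa using (hdiff z).le_of_lipschitz hlip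
      refine ContinuousLinearMap.opNorm_le_bound _ zero_le_one (fun v => ?_)
      have hsq := aux_sq (G' z) (hsa z) (hpos z) hAle v
      have happ : (F' z) v = (2:ℕ) • (G' z v) - v := by simp [hF']
      have hx : ‖(2:ℕ) • (G' z v) - v‖ ^ 2 ≤ ‖v‖ ^ 2 := by
        rw [expand]
        have : ⟪v, G' z v⟫ ≥ ‖G' z v‖ ^ 2 := hsq
        nlinarith
      rw [happ, one_mul]
      exact (pow_le_pow_iff_left₀ (norm_nonneg _) (norm_nonneg _) two_ne_zero).mp hx
    have := Convex.norm_image_sub_le_of_norm_hasFDerivWithin_le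
      (f := F) (f' := F') (C := 1) (s := Set.univ)
      (fun z _ => (hFd z).hasFDerivWithinAt) (fun z _ => hbound z)
      convex_univ (Set.mem_univ y) (Set.mem_univ x)
    simpa [hF, one_mul] using this
  constructor
  · exact ⟨ne_to_refl, fun h => firm_to_ne (refl_iff_firm.mp h)⟩
  · exact ⟨fun h => refl_iff_firm.mp (ne_to_refl h), firm_to_ne⟩
end

section
/- (Second-order Baillon–Haddad) Let C ⊆ H be nonempty open convex, f : C → ℝ convex and twice continuously Fréchet differentiable, and β > 0. Then ∇f is β-Lipschitz on C if and only if ∇f is 1/β-cocoercive on C, i.e., β⟨x - y, ∇f(x) - ∇f(y)⟩ ≥ ‖∇f(x) - ∇f(y)‖² for all x, y ∈ C. -/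
open RealInnerProductSpace

lemma psd_cauchy_schwarz {H : Type*} [NormedAddCommGroup H] [InnerProductSpace ℝ H]
    (A : H →L[ℝ] H) (hsymm : ∀ u w : H, ⟪A u, w⟫ = ⟪A w, u⟫)
    (hpsd : ∀ u : H, 0 ≤ ⟪u, A u⟫) (u v : H) :
    ⟪u, A v⟫ ^ 2 ≤ ⟪u, A u⟫ * ⟪v, A v⟫ := by
  have key : ∀ t : ℝ, 0 ≤ ⟪v, A v⟫ * (t * t) + (2 * ⟪u, A v⟫) * t + ⟪u, A u⟫ := by
    intro t
    have h := hpsd (u + t • v)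
    have e : ⟪u + t • v, A (u + t • v)⟫
        = ⟪u, A u⟫ + t * ⟪u, A v⟫ + t * ⟪v, A u⟫ + t * t * ⟪v, A v⟫ := by
      simp only [map_add, map_smul, inner_add_left, inner_add_right, inner_smul_left,
        inner_smul_right, starRingEnd_apply, star_trivial]
      ring
    have hc : ⟪v, A u⟫ = ⟪u, A v⟫ := by
      rw [real_inner_comm, hsymm]; exact real_inner_comm _ _
    rw [e, hc] at h
    linarith
  have := discrim_le_zero key
  rw [discrim] at this
  nlinarith

lemma psd_bound {H : Type*} [NormedAddCommGroup H] [InnerProductSpace ℝ H]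
    (A : H →L[ℝ] H) (hsymm : ∀ u w : H, ⟪A u, w⟫ = ⟪A w, u⟫)
    (hpsd : ∀ u : H, 0 ≤ ⟪u, A u⟫) {β : ℝ}
    (hb : ∀ u : H, ‖A u‖ ≤ β * ‖u‖) (v : H) :
    ‖A v‖ ^ 2 ≤ β * ⟪v, A v⟫ := by
  rcases eq_or_ne (A v) 0 with h0 | h0
  · simp [h0]
  · have h1 : ⟪A v, A v⟫ ^ 2 ≤ ⟪A v, A (A v)⟫ * ⟪v, A v⟫ := psd_cauchy_schwarz A hsymm hpsd (A v) v
    have h2 : ⟪A v, A (A v)⟫ ≤ β * ‖A v‖ ^ 2 := by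
      calc ⟪A v, A (A v)⟫ ≤ ‖A v‖ * ‖A (A v)‖ := real_inner_le_norm _ _
        _ ≤ ‖A v‖ * (β * ‖A v‖) := by
            have := hb (A v)
            nlinarith [norm_nonneg (A v)]
        _ = β * ‖A v‖ ^ 2 := by ring
    have h3 : ⟪A v, A v⟫ = ‖A v‖ ^ 2 := real_inner_self_eq_norm_sq _
    have hpos : 0 < ‖A v‖ := norm_pos_iff.mpr h0
    nlinarith [mul_le_mul_of_nonneg_right h2 (hpsd v), pow_pos hpos 2, hpsd v]

set_option maxHeartbeats 1000000 in
theorem second_order_baillon_haddad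
    {H : Type*} [NormedAddCommGroup H] [InnerProductSpace ℝ H] [CompleteSpace H]
    (C : Set H) (hCne : C.Nonempty) (hCopen : IsOpen C) (hCconv : Convex ℝ C)
    (f : H → ℝ) (f' : H → H) (f'' : H → H →L[ℝ] H) (β : ℝ) (hβ : 0 < β)
    (hconv : ConvexOn ℝ C f)
    (hdiff : ∀ x ∈ C, HasGradientAt f (f' x) x)
    (hdiff2 : ∀ x ∈ C, HasFDerivAt f' (f'' x) x)
    (hcont : ContinuousOn f'' C) :
    (∀ x ∈ C, ∀ y ∈ C, ‖f' x - f' y‖ ≤ β * ‖x - y‖) ↔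
      (∀ x ∈ C, ∀ y ∈ C, β * ⟪x - y, f' x - f' y⟫ ≥ ‖f' x - f' y‖ ^ 2) := by
  constructor
  · intro hL
    -- first order condition
    have fo : ∀ a ∈ C, ∀ b ∈ C, ⟪f' a, b - a⟫ ≤ f b - f a := by
      intro a ha b hb
      set g : ℝ → ℝ := fun t => f (a + t • (b - a)) with hg
      have h0 : a + (0:ℝ) • (b - a) = a := by simp
      have hline : HasDerivAt (fun t : ℝ => a + t • (b - a)) (b - a) 0 := by
        simpa using ((hasDerivAt_id (0:ℝ)).smul_const (b - a)).const_add a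
      have hfd := (hdiff a ha).hasFDerivAt
      rw [← h0] at hfd
      have hd : HasDerivAt g ⟪f' a, b - a⟫ 0 := by
        simpa [Function.comp_def, hg] using hfd.comp_hasDerivAt 0 hline
      have hts := hasDerivAt_iff_tendsto_slope.mp hd
      have hts' := hts.mono_left (nhdsWithin_mono 0 (fun t (ht : t ∈ Set.Ioi (0:ℝ)) => ne_of_gt ht))
      refine le_of_tendsto hts' ?_
      have hIoc : Set.Ioc (0:ℝ) 1 ∈ nhdsWithin (0:ℝ) (Set.Ioi 0) :=
        Ioc_mem_nhdsGT_of_mem (by constructor <;> norm_num)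
      filter_upwards [hIoc] with t ht
      obtain ⟨ht0, ht1⟩ := ht
      have hcvx : g t ≤ (1 - t) * f a + t * f b := by
        have e : a + t • (b - a) = (1 - t) • a + t • b := by
          module
        rw [hg]; simp only
        rw [e]
        exact hconv.2 ha hb (by linarith) (le_of_lt ht0) (by ring)
      have hg0 : g 0 = f a := by simp [hg]
      rw [slope_def_field]
      rw [hg0]
      rw [sub_zero, div_le_iff₀ ht0]
      nlinarith
    -- monotone gradient
    have mono : ∀ a ∈ C, ∀ b ∈ C, 0 ≤ ⟪a - b, f' a - f' b⟫ := by
      intro a ha b hb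
      have h1 := fo a ha b hb
      have h2 := fo b hb a ha
      have e : ⟪a - b, f' a - f' b⟫ = -(⟪f' a, b - a⟫ + ⟪f' b, a - b⟫) := by
        simp only [inner_sub_left, inner_sub_right]
        rw [real_inner_comm a (f' a), real_inner_comm b (f' a), real_inner_comm a (f' b),
          real_inner_comm b (f' b)]
        ring
      rw [e]; linarith
    -- symmetry of the second derivative
    have symm : ∀ z ∈ C, ∀ v w : H, ⟪f'' z v, w⟫ = ⟪f'' z w, v⟫ := by
      intro z hz v w
      set D := (InnerProductSpace.toDualMap ℝ H).toContinuousLinearMap with hD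
      have hDe : ∀ p u : H, D p u = ⟪p, u⟫ := fun p u => rfl
      have hev : ∀ᶠ y in nhds z, HasFDerivAt f (D (f' y)) y := by
        filter_upwards [hCopen.mem_nhds hz] with y hy
        have h := (hdiff y hy).hasFDerivAt
        have : D (f' y) = (InnerProductSpace.toDual ℝ H) (f' y) := by
          ext u; simp [hDe]
        rw [this]; exact h
      have hDd : HasFDerivAt (fun y => D (f' y)) (D.comp (f'' z)) z :=
        D.hasFDerivAt.comp z (hdiff2 z hz)
      exact second_derivative_symmetric_of_eventually_of_real hev hDd v w
    -- pointwise second derivative facts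
    have key : ∀ z ∈ C, ∀ u : H, 0 ≤ ⟪u, f'' z u⟫ ∧ ‖f'' z u‖ ≤ β * ‖u‖ := by
      intro z hz u
      set g : ℝ → H := fun t => f' (z + t • u) with hg
      have h0 : z + (0:ℝ) • u = z := by simp
      have hline : HasDerivAt (fun t : ℝ => z + t • u) u 0 := by
        simpa using ((hasDerivAt_id (0:ℝ)).smul_const u).const_add z
      have hfd := hdiff2 z hz
      rw [← h0] at hfd
      have hd : HasDerivAt g (f'' z u) 0 := by
        simpa [Function.comp_def, hg] using hfd.comp_hasDerivAt 0 hline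
      have hts := hasDerivAt_iff_tendsto_slope.mp hd
      have hmem : ∀ᶠ t in nhds (0:ℝ), z + t • u ∈ C := by
        have hc : Continuous fun t : ℝ => z + t • u := by continuity
        have ht := hc.tendsto 0
        rw [h0] at ht
        exact ht (hCopen.mem_nhds hz)
      constructor
      · have hts' := hts.mono_left (nhdsWithin_mono 0
          (fun t (ht : t ∈ Set.Ioi (0:ℝ)) => ne_of_gt ht))
        have htsi : Filter.Tendsto (fun t => ⟪u, slope g 0 t⟫)
            (nhdsWithin 0 (Set.Ioi 0)) (nhds ⟪u, f'' z u⟫) :=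
          Filter.Tendsto.inner tendsto_const_nhds hts'
        refine ge_of_tendsto htsi ?_
        filter_upwards [nhdsWithin_le_nhds hmem, self_mem_nhdsWithin] with t htC
          (ht0 : t ∈ Set.Ioi (0:ℝ))
        have hm := mono (z + t • u) htC z hz
        have e1 : (z + t • u) - z = t • u := by abel
        rw [e1, inner_smul_left] at hm
        have hinner : 0 ≤ ⟪u, f' (z + t • u) - f' z⟫ := by
          have : (0:ℝ) < t := ht0
          simp only [starRingEnd_apply, star_trivial] at hm
          nlinarith
        rw [slope_def_module]
        have hg0 : g 0 = f' z := by simp [hg]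
        rw [hg0, sub_zero, inner_smul_right]
        have hti : (0:ℝ) ≤ t⁻¹ := inv_nonneg.mpr (le_of_lt (show (0:ℝ) < t from ht0))
        exact mul_nonneg hti hinner
      · have htsn := hts.norm
        refine le_of_tendsto htsn ?_
        filter_upwards [nhdsWithin_le_nhds hmem, self_mem_nhdsWithin] with t htC
          (htne : t ≠ 0)
        have e1 : z + t • u - z = t • u := by abel
        have h1 : ‖g t - f' z‖ ≤ β * (|t| * ‖u‖) := by
          have h2 := hL (z + t • u) htC z hz
          rw [e1, norm_smul, Real.norm_eq_abs] at h2
          simpa [hg] using h2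
        have hg0 : g 0 = f' z := by simp [hg]
        rw [slope_def_module, sub_zero, hg0, norm_smul, Real.norm_eq_abs, abs_inv]
        have habs : (0:ℝ) < |t| := abs_pos.mpr htne
        calc |t|⁻¹ * ‖g t - f' z‖ ≤ |t|⁻¹ * (β * (|t| * ‖u‖)) :=
              mul_le_mul_of_nonneg_left h1 (inv_nonneg.mpr habs.le)
          _ = β * ‖u‖ := by field_simp
    -- the integral representation along a segment
    intro x hx y hy
    set v := x - y with hv
    set γ : ℝ → H := fun t => y + t • v with hγ
    have hγmem : ∀ t ∈ Set.uIcc (0:ℝ) 1, γ t ∈ C := by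
      intro t ht
      rw [Set.uIcc_of_le zero_le_one] at ht
      exact hCconv.add_smul_sub_mem hy hx ht
    have hγcont : Continuous γ := by continuity
    have hcontA : ContinuousOn (fun t => f'' (γ t)) (Set.uIcc (0:ℝ) 1) :=
      hcont.comp hγcont.continuousOn hγmem
    have hcontAv : ContinuousOn (fun t => f'' (γ t) v) (Set.uIcc (0:ℝ) 1) :=
      hcontA.clm_apply continuousOn_const
    have hderiv : ∀ t ∈ Set.uIcc (0:ℝ) 1, HasDerivAt (fun s => f' (γ s)) (f'' (γ t) v) t := by
      intro t ht
      have hline : HasDerivAt γ v t := by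
        have := ((hasDerivAt_id t).smul_const v).const_add y
        simp only [one_smul] at this
        exact this
      exact (hdiff2 (γ t) (hγmem t ht)).comp_hasDerivAt t hline
    have hint : IntervalIntegrable (fun t => f'' (γ t) v) MeasureTheory.volume 0 1 :=
      hcontAv.intervalIntegrable
    have heq : f' x - f' y = ∫ t in (0:ℝ)..1, f'' (γ t) v := by
      rw [intervalIntegral.integral_eq_sub_of_hasDerivAt hderiv hint]
      have h1 : γ 1 = x := by simp [hγ, hv]
      have h0 : γ 0 = y := by simp [hγ]
      rw [h1, h0]
    have hcontInner : ContinuousOn (fun t => ⟪v, f'' (γ t) v⟫) (Set.uIcc (0:ℝ) 1) :=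
      continuousOn_const.inner hcontAv
    have hinn : ⟪v, f' x - f' y⟫ = ∫ t in (0:ℝ)..1, ⟪v, f'' (γ t) v⟫ := by
      rw [heq]
      simpa using (ContinuousLinearMap.intervalIntegral_comp_comm (innerSL ℝ v) hint).symm
    set w := f' x - f' y with hw
    have hS : 0 ≤ ⟪v, w⟫ := by
      have := mono x hx y hy
      rw [hv, hw]; exact this
    have hcw : ∀ c : ℝ, 0 < c → ‖w‖ ≤ (β * ⟪v, w⟫ + c ^ 2) / (2 * c) := by
      intro c hc
      have pt : ∀ t ∈ Set.Icc (0:ℝ) 1,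
          ‖f'' (γ t) v‖ ≤ (β * ⟪v, f'' (γ t) v⟫ + c ^ 2) / (2 * c) := by
        intro t ht
        have htu : t ∈ Set.uIcc (0:ℝ) 1 := by
          rw [Set.uIcc_of_le zero_le_one]; exact ht
        obtain ⟨hpsd, hbd⟩ := key (γ t) (hγmem t htu) v
        have hb2 : ‖f'' (γ t) v‖ ^ 2 ≤ β * ⟪v, f'' (γ t) v⟫ := by
          refine psd_bound (f'' (γ t)) (symm (γ t) (hγmem t htu)) ?_ ?_ v
          · intro u; exact (key (γ t) (hγmem t htu) u).1
          · intro u; exact (key (γ t) (hγmem t htu) u).2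
        rw [le_div_iff₀ (by positivity)]
        nlinarith [sq_nonneg (‖f'' (γ t) v‖ - c)]
      have hint2 : IntervalIntegrable
          (fun t => (β * ⟪v, f'' (γ t) v⟫ + c ^ 2) / (2 * c)) MeasureTheory.volume 0 1 :=
        (((continuousOn_const.mul hcontInner).add continuousOn_const).div_const
          _).intervalIntegrable
      calc ‖w‖ = ‖∫ t in (0:ℝ)..1, f'' (γ t) v‖ := congrArg norm heq
        _ ≤ ∫ t in (0:ℝ)..1, ‖f'' (γ t) v‖ :=
            intervalIntegral.norm_integral_le_integral_norm zero_le_one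
        _ ≤ ∫ t in (0:ℝ)..1, (β * ⟪v, f'' (γ t) v⟫ + c ^ 2) / (2 * c) :=
            intervalIntegral.integral_mono_on zero_le_one hint.norm hint2 pt
        _ = ((∫ t in (0:ℝ)..1, β * ⟪v, f'' (γ t) v⟫) + ∫ t in (0:ℝ)..1, (c ^ 2 : ℝ)) / (2 * c) := by
            rw [intervalIntegral.integral_div, intervalIntegral.integral_add (f := fun t => β * ⟪v, f'' (γ t) v⟫) (g := fun _ => c ^ 2)
              ((continuousOn_const.mul hcontInner).intervalIntegrable)
              intervalIntegrable_const]
        _ = (β * ⟪v, w⟫ + c ^ 2) / (2 * c) := by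
            rw [intervalIntegral.integral_const_mul, intervalIntegral.integral_const, ← hinn]
            simp
    rcases eq_or_ne w 0 with h0 | h0
    · rw [h0]
      simp
    · have hwpos : 0 < ‖w‖ := norm_pos_iff.mpr h0
      have := hcw ‖w‖ hwpos
      rw [le_div_iff₀ (by positivity)] at this
      nlinarith
  · intro hcc x hx y hy
    have h := hcc x hx y hy
    have h2 : ⟪x - y, f' x - f' y⟫ ≤ ‖x - y‖ * ‖f' x - f' y‖ := real_inner_le_norm _ _
    rcases eq_or_ne (f' x - f' y) 0 with h0 | h0
    · rw [h0]
      simp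
      positivity
    · have hgpos : 0 < ‖f' x - f' y‖ := norm_pos_iff.mpr h0
      nlinarith [norm_nonneg (x - y)]
end
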